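/- arXiv:1412.0906 — 7 statements merged into one kernel-verified Lean document; each statement's English description precedes it below -/
import Mathlib

section
/- Let t ≥ 1 and let σ_1 ≤ σ_2 ≤ … ≤ σ_t be non-negative integers. Then the following are equivalent: (1) for every integer k with 0 ≤ k ≤ σ_1 + … + σ_t there exists a subset A ⊆ {1,…,t} with k = Σ_{i∈A} σ_i; (2) (σ_1,…,σ_t) satisfies the changemaker condition. -/
/-
Think of the `σ i` as coins and let `P` be the total value of the coins below `a`. If every
amount in `[0, P]` can be paid with those coins and `σ a ≤ P + 1`, then every amount in
`[0, P + σ a]` can be paid with them and `a`: an amount `k > P` is `a` plus a payment of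
`k - σ a ≤ P`. Conversely, if `σ a ≥ P + 2`, the amount `P + 1` cannot be paid: the coins below
`a` give at most `P`, and every other coin is by monotonicity already worth at least `σ a`.
-/

/-- The changemaker condition for a tuple `σ_1 ≤ … ≤ σ_t` of non-negative integers
(indexed here by `Fin t`, so `σ i` corresponds to `σ_{i+1}` in 1-based notation):
`σ_1 ≤ 1` and `σ_{i-1} ≤ σ_i ≤ σ_1 + … + σ_{i-1} + 1` for `1 < i ≤ t`. -/
def Changemaker {t : ℕ} (σ : Fin t → ℕ) : Prop :=
  (∀ i : Fin t, (i : ℕ) = 0 → σ i ≤ 1) ∧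
  (∀ i j : Fin t, (j : ℕ) + 1 = (i : ℕ) →
    σ j ≤ σ i ∧ σ i ≤ (∑ k ∈ Finset.univ.filter (fun k : Fin t => (k : ℕ) < (i : ℕ)), σ k) + 1)

open Finset

def SubsetSumsComplete {α : Type*} (σ : α → ℕ) (s : Finset α) : Prop :=
  ∀ k ≤ ∑ i ∈ s, σ i, ∃ A ⊆ s, k = ∑ i ∈ A, σ i

section SubsetSums

variable {α : Type*} {σ : α → ℕ} {s : Finset α}

theorem subsetSumsComplete_empty : SubsetSumsComplete σ ∅ := fun k hk =>
  ⟨∅, empty_subset _, by simpa using hk⟩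

theorem SubsetSumsComplete.insert [DecidableEq α] {a : α}
    (h : SubsetSumsComplete σ s) (ha : a ∉ s) (hle : σ a ≤ ∑ i ∈ s, σ i + 1) :
    SubsetSumsComplete σ (insert a s) := by
  intro k hk
  rw [sum_insert ha] at hk
  by_cases hks : k ≤ ∑ i ∈ s, σ i
  · obtain ⟨A, hAs, rfl⟩ := h k hks
    exact ⟨A, hAs.trans (subset_insert a s), rfl⟩
  · obtain ⟨A, hAs, hA⟩ := h (k - σ a) (by omega)
    -- a bare `insert` here would refer to this lemma itself
    refine ⟨Insert.insert a A, insert_subset_insert a hAs, ?_⟩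
    rw [sum_insert fun haA => ha (hAs haA), ← hA]
    omega

variable [LinearOrder α]

theorem subsetSumsComplete_of_le_sum_lt_add_one
    (h : ∀ a ∈ s, σ a ≤ ∑ x ∈ s with x < a, σ x + 1) : SubsetSumsComplete σ s := by
  induction s using Finset.induction_on_max with
  | empty => exact subsetSumsComplete_empty
  | insert a s hlt ih =>
    have ha : a ∉ s := fun has => lt_irrefl a (hlt a has)
    have hbelow_a : {x ∈ insert a s | x < a} = s := by
      rw [filter_insert, if_neg (lt_irrefl a), filter_true_of_mem hlt]
    have hbelow_b : ∀ b ∈ s, {x ∈ insert a s | x < b} = {x ∈ s | x < b} := fun b hb => by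
      rw [filter_insert, if_neg (hlt b hb).not_gt]
    refine (ih fun b hb => ?_).insert ha ?_
    · simpa [hbelow_b b hb] using h b (mem_insert_of_mem hb)
    · simpa [hbelow_a] using h a (mem_insert_self a s)

theorem le_sum_lt_add_one_of_subsetSumsComplete
    (hσ : MonotoneOn σ s) (h : SubsetSumsComplete σ s) {a : α} (ha : a ∈ s) :
    σ a ≤ ∑ x ∈ s with x < a, σ x + 1 := by
  set P := ∑ x ∈ s with x < a, σ x
  by_contra! hlarge
  have hsplit := sum_filter_add_sum_filter_not s (· < a) σ
  have ha_le : σ a ≤ ∑ x ∈ s with ¬x < a, σ x :=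
    single_le_sum (fun _ _ => Nat.zero_le _) (mem_filter.2 ⟨ha, lt_irrefl a⟩)
  obtain ⟨A, hAs, hA⟩ := h (P + 1) (by omega)
  by_cases hA_above : ∃ m ∈ A, a ≤ m
  · obtain ⟨m, hm, ham⟩ := hA_above
    have : σ a ≤ σ m := hσ ha (hAs hm) ham
    have : σ m ≤ ∑ x ∈ A, σ x := single_le_sum (fun _ _ => Nat.zero_le _) hm
    omega
  · have : ∑ x ∈ A, σ x ≤ P := sum_le_sum_of_subset fun m hm =>
      mem_filter.2 ⟨hAs hm, not_le.1 fun ham => hA_above ⟨m, hm, ham⟩⟩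
    omega

theorem subsetSumsComplete_iff (hσ : MonotoneOn σ s) :
    SubsetSumsComplete σ s ↔ ∀ a ∈ s, σ a ≤ ∑ x ∈ s with x < a, σ x + 1 :=
  ⟨fun h _ ha => le_sum_lt_add_one_of_subsetSumsComplete hσ h ha,
    subsetSumsComplete_of_le_sum_lt_add_one⟩

end SubsetSums

theorem changemaker_iff_of_monotone {t : ℕ} {σ : Fin t → ℕ} (hσ : Monotone σ) :
    Changemaker σ ↔ ∀ i, σ i ≤ ∑ k with k < i, σ k + 1 := by
  have hbottom : ∀ i : Fin t, (i : ℕ) = 0 → ∑ k with k < i, σ k = 0 := fun i hi =>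
    sum_eq_zero fun k hk => absurd (mem_filter.1 hk).2 (by simp [Fin.lt_def, hi])
  constructor
  · rintro ⟨hfirst, hstep⟩ i
    rcases i with ⟨_ | j, hi⟩
    · simpa [hbottom ⟨0, hi⟩ rfl] using hfirst ⟨0, hi⟩ rfl
    · exact (hstep ⟨j + 1, hi⟩ ⟨j, by omega⟩ rfl).2
  · intro h
    refine ⟨fun i hi => by simpa [hbottom i hi] using h i, fun i j hji => ⟨hσ ?_, h i⟩⟩
    rw [Fin.le_def]
    omega

theorem stmt0_general (t : ℕ) (σ : Fin t → ℕ) (hmono : Monotone σ) :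
    (∀ k : ℕ, k ≤ ∑ i, σ i → ∃ A : Finset (Fin t), k = ∑ i ∈ A, σ i) ↔ Changemaker σ := by
  have hcomplete : (∀ k : ℕ, k ≤ ∑ i, σ i → ∃ A : Finset (Fin t), k = ∑ i ∈ A, σ i) ↔
      SubsetSumsComplete σ univ := by
    simp [SubsetSumsComplete]
  rw [hcomplete, subsetSumsComplete_iff (hmono.monotoneOn _), changemaker_iff_of_monotone hmono]
  simp

/-- Brown's criterion: for `t ≥ 1` and non-negative integers `σ_1 ≤ … ≤ σ_t`,
every integer `0 ≤ k ≤ σ_1 + … + σ_t` is a subset sum of the `σ_i` if and only if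
`(σ_1, …, σ_t)` satisfies the changemaker condition. -/
theorem stmt0 (t : ℕ) (ht : 1 ≤ t) (σ : Fin t → ℕ) (hmono : Monotone σ) :
    (∀ k : ℕ, k ≤ ∑ i, σ i → ∃ A : Finset (Fin t), k = ∑ i ∈ A, σ i) ↔ Changemaker σ :=
  stmt0_general t σ hmono
end

section
/- If ρ realizes (V_i), then for every integer k with 0 ≤ 2k ≤ n, the set {‖c‖² : c ∈ ℤ^{t+1} characteristic, c·ρ = 2k − n} has least element 8V_k + t + 1. -/
/-- The standard inner product on `ℤ^{t+1}`. -/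
def dotP {t : ℕ} (x y : Fin (t + 1) → ℤ) : ℤ := ∑ i, x i * y i

/-- A vector of `ℤ^{t+1}` is characteristic if all of its coordinates are odd. -/
def CharVec {t : ℕ} (c : Fin (t + 1) → ℤ) : Prop := ∀ i, Odd (c i)

/-- `ρ ∈ ℤ^{t+1}` realizes the sequence `(V_i)` if, with `n = ‖ρ‖²`, for every integer `k`
with `2|k| ≤ n` the set `{‖c‖² : c characteristic, c·ρ ≡ n + 2k (mod 2n)}` has least
element `8V_{|k|} + t + 1`. -/
def Realizes {t : ℕ} (V : ℕ → ℕ) (ρ : Fin (t + 1) → ℤ) : Prop :=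
  ∀ k : ℤ, 2 * |k| ≤ dotP ρ ρ →
    IsLeast {N : ℤ | ∃ c : Fin (t + 1) → ℤ, CharVec c ∧
        dotP c ρ ≡ dotP ρ ρ + 2 * k [ZMOD 2 * dotP ρ ρ] ∧ N = dotP c c}
      (8 * (V k.natAbs : ℤ) + t + 1)

/-!
A minimizer `c` of `‖c‖²` in the class `c·ρ ≡ n + 2k (mod 2n)` is in particular no longer than
`c ± 2ρ`, which lies in the same class; expanding the norms gives `|c·ρ| ≤ n`. Since `2k - n` also
lies in `[-n, n]` and in that class, `c·ρ = ±(2k - n)`, and replacing `c` by `-c` if necessary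
yields a characteristic vector of the minimal norm with `c·ρ = 2k - n`. The lower bound is
immediate, as equality implies the congruence.
-/

section
variable {t : ℕ}

lemma dotP_add_smul_left (c ρ : Fin (t + 1) → ℤ) (a : ℤ) :
    dotP (c + a • ρ) ρ = dotP c ρ + a * dotP ρ ρ := by
  simp only [dotP, Pi.add_apply, Pi.smul_apply, smul_eq_mul, Finset.mul_sum,
    ← Finset.sum_add_distrib]
  exact Finset.sum_congr rfl fun i _ => by ring

lemma dotP_add_smul_self (c ρ : Fin (t + 1) → ℤ) (a : ℤ) :
    dotP (c + a • ρ) (c + a • ρ) = dotP c c + 2 * a * dotP c ρ + a ^ 2 * dotP ρ ρ := by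
  simp only [dotP, Pi.add_apply, Pi.smul_apply, smul_eq_mul, Finset.mul_sum,
    ← Finset.sum_add_distrib]
  exact Finset.sum_congr rfl fun i _ => by ring

lemma dotP_neg_left (c ρ : Fin (t + 1) → ℤ) : dotP (-c) ρ = -dotP c ρ := by
  simp [dotP, Finset.sum_neg_distrib]

lemma dotP_neg_neg (c : Fin (t + 1) → ℤ) : dotP (-c) (-c) = dotP c c := by
  simp [dotP]

lemma dotP_add_two_smul_modEq (c ρ : Fin (t + 1) → ℤ) (a : ℤ) :
    dotP (c + (2 * a) • ρ) ρ ≡ dotP c ρ [ZMOD 2 * dotP ρ ρ] := by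
  rw [dotP_add_smul_left]
  exact Int.modEq_iff_dvd.mpr ⟨-a, by ring⟩

lemma CharVec.add_two_smul {c : Fin (t + 1) → ℤ} (hc : CharVec c) (a : ℤ)
    (ρ : Fin (t + 1) → ℤ) : CharVec (c + (2 * a) • ρ) := fun i =>
  (hc i).add_even ⟨a * ρ i, by simp only [Pi.smul_apply, smul_eq_mul]; ring⟩

lemma CharVec.neg {c : Fin (t + 1) → ℤ} (hc : CharVec c) : CharVec (-c) := fun i =>
  (hc i).neg

lemma abs_dotP_le_of_forall_le {c ρ : Fin (t + 1) → ℤ}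
    (hmin : ∀ a : ℤ, dotP c c ≤ dotP (c + (2 * a) • ρ) (c + (2 * a) • ρ)) :
    |dotP c ρ| ≤ dotP ρ ρ := by
  have h₁ := hmin 1
  have h₂ := hmin (-1)
  rw [dotP_add_smul_self] at h₁ h₂
  exact abs_le.mpr ⟨by linarith, by linarith⟩

end

lemma Int.eq_or_eq_neg_of_modEq_of_abs_le {x y n : ℤ} (hx : |x| ≤ n) (hy : |y| ≤ n)
    (h : x ≡ y [ZMOD 2 * n]) : x = y ∨ x = -y := by
  obtain ⟨m, hm⟩ := Int.modEq_iff_dvd.mp h.symm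
  rw [abs_le] at hx hy
  rcases lt_trichotomy m 0 with hm0 | rfl | hm0
  · right; nlinarith
  · left; linarith
  · right; nlinarith

theorem stmt1_general (t : ℕ) (V : ℕ → ℕ)
    (ρ : Fin (t + 1) → ℤ)
    (hreal : Realizes V ρ) :
    ∀ k : ℤ, 0 ≤ k → 2 * k ≤ dotP ρ ρ →
      IsLeast {N : ℤ | ∃ c : Fin (t + 1) → ℤ, CharVec c ∧
          dotP c ρ = 2 * k - dotP ρ ρ ∧ N = dotP c c}
        (8 * (V k.natAbs : ℤ) + t + 1) := by
  intro k hk₀ hkn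
  have hclass : ∀ x, x = 2 * k - dotP ρ ρ → x ≡ dotP ρ ρ + 2 * k [ZMOD 2 * dotP ρ ρ] :=
    fun x hx => hx ▸ Int.modEq_iff_dvd.mpr ⟨1, by ring⟩
  obtain ⟨⟨c, hc, hcong, hcc⟩, hlb⟩ := hreal k (by rwa [abs_of_nonneg hk₀])
  refine ⟨?_, fun N ⟨c', hc', hdot, hN⟩ => hlb ⟨c', hc', hclass _ hdot, hN⟩⟩
  have hmin : ∀ a : ℤ, dotP c c ≤ dotP (c + (2 * a) • ρ) (c + (2 * a) • ρ) := fun a =>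
    hcc ▸ hlb ⟨_, hc.add_two_smul a ρ, (dotP_add_two_smul_modEq c ρ a).trans hcong, rfl⟩
  rcases Int.eq_or_eq_neg_of_modEq_of_abs_le (abs_dotP_le_of_forall_le hmin)
      (abs_le.mpr ⟨by linarith, by linarith⟩) (hcong.trans (hclass _ rfl).symm) with h | h
  · exact ⟨c, hc, h, hcc⟩
  · exact ⟨-c, hc.neg, by rw [dotP_neg_left, h, neg_neg], hcc.trans (dotP_neg_neg c).symm⟩

/-- If `ρ` realizes `(V_i)`, then for every integer `k` with `0 ≤ 2k ≤ n`, the set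
`{‖c‖² : c characteristic, c·ρ = 2k − n}` has least element `8V_k + t + 1`. -/
theorem stmt1 (t : ℕ) (V : ℕ → ℕ) (g : ℕ)
    (hV1 : ∀ i, V (i + 1) ≤ V i)
    (hV2 : ∀ i, V i = 0 ↔ g ≤ i)
    (hV3 : ∀ i, V i ≤ V (i + 1) + 1)
    (ρ : Fin (t + 1) → ℤ)
    (hmono : ∀ i j : Fin (t + 1), i ≤ j → ρ j ≤ ρ i)
    (hpos : ∀ i, 1 ≤ ρ i)
    (hg : 2 * (g : ℤ) ≤ dotP ρ ρ)
    (hreal : Realizes V ρ) :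
    ∀ k : ℤ, 0 ≤ k → 2 * k ≤ dotP ρ ρ →
      IsLeast {N : ℤ | ∃ c : Fin (t + 1) → ℤ, CharVec c ∧
          dotP c ρ = 2 * k - dotP ρ ρ ∧ N = dotP c c}
        (8 * (V k.natAbs : ℤ) + t + 1) :=
  stmt1_general t V ρ hreal
end

section
/- If ρ realizes (V_i), then: (1) 2g̃ = Σ_{i=0}^t ρ_i(ρ_i − 1); (2) for every integer m with 0 ≤ m < V_0, T_m = max{ρ·α : α ∈ S_m}; and (3) g̃ ≤ max{ρ·α : α ∈ S_{V_0}}. -/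
/-- `T_m = #{i : 0 ≤ i < g̃ and 0 < V_i ≤ m}` (note `T_0 = 0`). -/
def Tq (V : ℕ → ℕ) (g m : ℕ) : ℕ :=
  ((Finset.range g).filter (fun i => 0 < V i ∧ V i ≤ m)).card

/-- `S_m = {α ∈ ℤ^{t+1} : α_i ≥ 0 for all i, Σ α_i(α_i+1) = 2m}`. -/
def Sset (t m : ℕ) : Set (Fin (t + 1) → ℤ) :=
  {α | (∀ i, 0 ≤ α i) ∧ ∑ i, α i * (α i + 1) = 2 * (m : ℤ)}

open Finset Matrix

section Staircase

variable {V : ℕ → ℕ} {g : ℕ}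

lemma apply_zero_le_apply_add (hV3 : ∀ i, V i ≤ V (i + 1) + 1) (k : ℕ) : V 0 ≤ V k + k := by
  induction k with
  | zero => simp
  | succ k ih => have := hV3 k; omega

lemma Tq_le (m : ℕ) : Tq V g m ≤ g :=
  (card_filter_le _ _).trans (card_range g).le

lemma le_Tq_add_iff (hV : Antitone V) (hV2 : ∀ i, V i = 0 ↔ g ≤ i) {m j : ℕ} (hj : j ≤ g) :
    g ≤ Tq V g m + j ↔ V j ≤ m := by
  constructor
  · intro h
    by_contra! hlt
    have hjg : ¬ g ≤ j := (hV2 j).not.1 (by omega)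
    have hsub : (range g).filter (fun i => 0 < V i ∧ V i ≤ m) ⊆ Ico (j + 1) g := by
      intro i hi
      simp only [mem_filter, mem_range] at hi
      have : j < i := by
        by_contra! hij
        exact absurd (hV hij) (by omega)
      simp only [mem_Ico]
      omega
    have := card_le_card hsub
    rw [Nat.card_Ico] at this
    unfold Tq at h
    omega
  · intro h
    have hsub : Ico j g ⊆ (range g).filter (fun i => 0 < V i ∧ V i ≤ m) := by
      intro i hi
      simp only [mem_Ico] at hi
      have : V i ≠ 0 := fun h0 => by have := (hV2 i).1 h0; omega
      simp only [mem_filter, mem_range]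
      exact ⟨hi.2, by omega, (hV hi.1).trans h⟩
    have := card_le_card hsub
    rw [Nat.card_Ico] at this
    unfold Tq
    omega

lemma exists_apply_eq_and_Tq_add_eq (hV : Antitone V) (hV2 : ∀ i, V i = 0 ↔ g ≤ i)
    (hV3 : ∀ i, V i ≤ V (i + 1) + 1) {m : ℕ} (hm : m < V 0) :
    ∃ w, V w = m ∧ Tq V g m + w = g := by
  have hT := Tq_le (V := V) (g := g) m
  refine ⟨g - Tq V g m, ?_, by omega⟩
  have hle := (le_Tq_add_iff hV hV2 (m := m) (Nat.sub_le g (Tq V g m))).1 (by omega)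
  have hpos : g - Tq V g m ≠ 0 := fun h0 => by rw [h0] at hle; omega
  have hprev := (le_Tq_add_iff hV hV2 (m := m) (j := g - Tq V g m - 1) (by omega)).not.1 (by omega)
  have := hV3 (g - Tq V g m - 1)
  rw [Nat.sub_add_cancel (Nat.one_le_iff_ne_zero.2 hpos)] at this
  omega

end Staircase

lemma sub_two_mul_abs_le_abs_of_modEq {n k x : ℤ} (hk : 2 * |k| ≤ n)
    (hx : x ≡ n + 2 * k [ZMOD 2 * n]) : n - 2 * |k| ≤ |x| := by
  obtain ⟨l, hl⟩ := Int.ModEq.dvd hx.symm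
  have hn : 0 ≤ n := (mul_nonneg zero_le_two (abs_nonneg k)).trans hk
  have := le_abs_self k
  have := neg_abs_le k
  rcases le_or_gt 0 l with hl0 | hl0
  · have : 0 ≤ 2 * n * l := by positivity
    linarith [le_abs_self x]
  · have : 2 * n * l ≤ 2 * n * (-1) := mul_le_mul_of_nonneg_left (by omega) (by positivity)
    linarith [neg_le_abs x]

section Lattice

variable {t : ℕ}

lemma one_le_mul_self_of_odd {z : ℤ} (hz : Odd z) : 1 ≤ z * z := by
  obtain ⟨γ, rfl⟩ := hz
  rcases le_or_gt 0 γ with h | h <;> nlinarith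

lemma dotP_eq_dotProduct (x y : Fin (t + 1) → ℤ) : dotP x y = x ⬝ᵥ y := rfl

lemma dotP_nonneg {x y : Fin (t + 1) → ℤ} (hx : ∀ i, 0 ≤ x i) (hy : ∀ i, 0 ≤ y i) :
    0 ≤ dotP x y :=
  sum_nonneg fun i _ => mul_nonneg (hx i) (hy i)

lemma sum_mul_sub_one_eq (ρ : Fin (t + 1) → ℤ) :
    ∑ i, ρ i * (ρ i - 1) = dotP ρ ρ - ∑ i, ρ i := by
  simp only [dotP, ← sum_sub_distrib]
  exact sum_congr rfl fun i _ => by ring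

lemma CharVec.add_one_le_dotP_self {c : Fin (t + 1) → ℤ} (hc : CharVec c) :
    (t + 1 : ℤ) ≤ dotP c c :=
  calc (t + 1 : ℤ) = ∑ _i : Fin (t + 1), (1 : ℤ) := by simp
    _ ≤ dotP c c := sum_le_sum fun i _ => one_le_mul_self_of_odd (hc i)

lemma CharVec.exists_mem_Sset {c ρ : Fin (t + 1) → ℤ} {m : ℕ} (hc : CharVec c)
    (hcc : dotP c c = 8 * m + t + 1) (hρ : ∀ i, 0 ≤ ρ i) :
    ∃ α ∈ Sset t m, |dotP c ρ| ≤ 2 * dotP ρ α + ∑ i, ρ i := by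
  have hodd : ∀ i, ∃ a, 0 ≤ a ∧ |c i| = 2 * a + 1 := fun i => by
    obtain ⟨a, ha⟩ := odd_abs.2 (hc i)
    exact ⟨a, by linarith [abs_nonneg (c i)], ha⟩
  choose α hα0 hα using hodd
  refine ⟨α, ⟨hα0, ?_⟩, ?_⟩
  · have hterm : ∀ i, 4 * (α i * (α i + 1)) = c i * c i - 1 := fun i => by
      rw [← abs_mul_abs_self, hα]; ring
    have : 4 * ∑ i, α i * (α i + 1) = dotP c c - (t + 1) := by
      simp [mul_sum, hterm, sum_sub_distrib, dotP]
    linarith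
  · calc |dotP c ρ| ≤ ∑ i, |c i * ρ i| := abs_sum_le_sum_abs _ _
      _ = ∑ i, (2 * α i + 1) * ρ i :=
        sum_congr rfl fun i _ => by rw [abs_mul, hα, abs_of_nonneg (hρ i)]
      _ = 2 * dotP ρ α + ∑ i, ρ i := by
        simp only [dotP, mul_sum, ← sum_add_distrib]
        exact sum_congr rfl fun i _ => by ring

lemma charVec_two_mul_add_one (α : Fin (t + 1) → ℤ) : CharVec (fun i => 2 * α i + 1) :=
  fun i => ⟨α i, rfl⟩

lemma dotP_two_mul_add_one (α ρ : Fin (t + 1) → ℤ) :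
    dotP (fun i => 2 * α i + 1) ρ = 2 * dotP ρ α + ∑ i, ρ i := by
  simp only [dotP, mul_sum, ← sum_add_distrib]
  exact sum_congr rfl fun i _ => by ring

lemma dotP_two_mul_add_one_self {α : Fin (t + 1) → ℤ} {m : ℕ} (hα : α ∈ Sset t m) :
    dotP (fun i => 2 * α i + 1) (fun i => 2 * α i + 1) = 8 * m + t + 1 := by
  have : dotP (fun i => 2 * α i + 1) (fun i => 2 * α i + 1)
      = 4 * ∑ i, α i * (α i + 1) + ∑ _i : Fin (t + 1), (1 : ℤ) := by
    simp only [dotP, mul_sum, ← sum_add_distrib]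
    exact sum_congr rfl fun i _ => by ring
  rw [this, hα.2]
  simp
  ring

lemma eq_zero_of_mem_Sset_zero {α : Fin (t + 1) → ℤ} (hα : α ∈ Sset t 0) : α = 0 := by
  obtain ⟨h0, hsum⟩ := hα
  have hsum0 : ∑ i, α i * (α i + 1) = 0 := by simpa using hsum
  have hterms := (sum_eq_zero_iff_of_nonneg fun i _ =>
    mul_nonneg (h0 i) (by linarith [h0 i])).1 hsum0
  funext i
  rcases mul_eq_zero.1 (hterms i (mem_univ i)) with h | h
  · exact h
  · linarith [h0 i]

namespace Realizes

variable {V : ℕ → ℕ} {ρ : Fin (t + 1) → ℤ}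

lemma le_dotP_self (h : Realizes V ρ) {c : Fin (t + 1) → ℤ} {k : ℤ}
    (hk : 2 * |k| ≤ dotP ρ ρ) (hc : CharVec c)
    (hcρ : dotP c ρ ≡ dotP ρ ρ + 2 * k [ZMOD 2 * dotP ρ ρ]) :
    8 * (V k.natAbs : ℤ) + t + 1 ≤ dotP c c :=
  (h k hk).2 ⟨c, hc, hcρ, rfl⟩

lemma exists_mem_Sset (h : Realizes V ρ) (hρ : ∀ i, 0 ≤ ρ i) {k : ℤ}
    (hk : 2 * |k| ≤ dotP ρ ρ) :
    ∃ α ∈ Sset t (V k.natAbs), dotP ρ ρ - 2 * |k| ≤ 2 * dotP ρ α + ∑ i, ρ i := by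
  obtain ⟨c, hc, hcρ, hcc⟩ := (h k hk).1
  obtain ⟨α, hα, hle⟩ := hc.exists_mem_Sset hcc.symm hρ
  exact ⟨α, hα, (sub_two_mul_abs_le_abs_of_modEq hk hcρ).trans hle⟩

lemma two_mul_eq_sum_mul_sub_one (h : Realizes V ρ) {g : ℕ} (hV2 : ∀ i, V i = 0 ↔ g ≤ i)
    (hpos : ∀ i, 1 ≤ ρ i) : 2 * (g : ℤ) = ∑ i, ρ i * (ρ i - 1) := by
  have hρ : ∀ i, 0 ≤ ρ i := fun i => zero_le_one.trans (hpos i)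
  have hσ : 0 ≤ ∑ i, ρ i := sum_nonneg fun i _ => hρ i
  have hsum := sum_mul_sub_one_eq ρ
  obtain ⟨s, hs⟩ : ∃ s : ℕ, ∑ i, ρ i * (ρ i - 1) = 2 * s := by
    obtain ⟨r, hr⟩ := even_sum _ fun i _ => Int.even_mul_pred_self (ρ i)
    have : 0 ≤ ∑ i, ρ i * (ρ i - 1) :=
      sum_nonneg fun i _ => mul_nonneg (hρ i) (sub_nonneg.2 (hpos i))
    obtain ⟨s, rfl⟩ := Int.eq_ofNat_of_zero_le (show 0 ≤ r by linarith)
    exact ⟨s, by linarith⟩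
  have hgs : g ≤ s := by
    have h1ρ : dotP 1 ρ = dotP ρ ρ + 2 * -s := by
      rw [dotP_eq_dotProduct 1, one_dotProduct]; linarith
    have h11 : dotP (1 : Fin (t + 1) → ℤ) 1 = t + 1 := by simp [dotP]
    have := h.le_dotP_self (c := 1) (k := -s) (by rw [abs_neg, Int.abs_natCast]; linarith)
      (fun _ => odd_one) (by rw [h1ρ])
    rw [h11, Int.natAbs_neg, Int.natAbs_natCast] at this
    exact (hV2 s).1 (by omega)
  -- a vector of norm `t + 1` in the class `k = s - 1` would have `|c·ρ| ≤ Σ ρᵢ < n - 2(s - 1)`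
  have hsg : s ≤ g := by
    by_contra! hlt
    obtain ⟨α, hα, hle⟩ := h.exists_mem_Sset hρ (k := (s - 1 : ℕ))
      (by rw [Int.abs_natCast]; omega)
    rw [Int.natAbs_natCast, (hV2 _).2 (by omega)] at hα
    rw [eq_zero_of_mem_Sset_zero hα, dotP_eq_dotProduct ρ 0, dotProduct_zero,
      Int.abs_natCast] at hle
    push_cast [Nat.one_le_iff_ne_zero.2 (by omega : s ≠ 0)] at hle
    linarith
  rw [hs, le_antisymm hgs hsg]

variable {g : ℕ}

lemma V_le_of_mem_Sset (h : Realizes V ρ) (hσ : 2 * (g : ℤ) = dotP ρ ρ - ∑ i, ρ i)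
    (hρ : ∀ i, 0 ≤ ρ i) (hg : 2 * (g : ℤ) ≤ dotP ρ ρ) {α : Fin (t + 1) → ℤ} {m j : ℕ}
    (hα : α ∈ Sset t m) (hj : dotP ρ α + j = g) : V j ≤ m := by
  have hρα := dotP_nonneg hρ hα.1
  have := h.le_dotP_self (k := -j) (by rw [abs_neg, Int.abs_natCast]; linarith)
    (charVec_two_mul_add_one α)
    (by rw [dotP_two_mul_add_one, show 2 * dotP ρ α + ∑ i, ρ i = dotP ρ ρ + 2 * -j by linarith])
  rw [dotP_two_mul_add_one_self hα, Int.natAbs_neg, Int.natAbs_natCast] at this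
  omega

lemma dotP_le_of_mem_Sset (h : Realizes V ρ) (hσ : 2 * (g : ℤ) = dotP ρ ρ - ∑ i, ρ i)
    (hV0 : ∀ k, V 0 ≤ V k + k) (hVn : 2 * (V 0 : ℤ) ≤ dotP ρ ρ) {α : Fin (t + 1) → ℤ} {m : ℕ}
    (hm : m < V 0) (hα : α ∈ Sset t m) : dotP ρ α ≤ g := by
  by_contra! hgt
  obtain ⟨k, hk⟩ := Int.eq_ofNat_of_zero_le (sub_nonneg.2 hgt.le)
  set c : Fin (t + 1) → ℤ := fun i => 2 * α i + 1
  -- `c - 2ρ` lies in the class `k` of `c`, and is shorter by `8k`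
  have hcρ : dotP c ρ = dotP ρ ρ + 2 * k := by
    rw [dotP_two_mul_add_one]; linarith
  have hcρ' : dotP (c - (2 : ℤ) • ρ) ρ = dotP c ρ - 2 * dotP ρ ρ := by
    simp only [dotP_eq_dotProduct, sub_dotProduct, smul_dotProduct, smul_eq_mul]
  have hcc' : dotP (c - (2 : ℤ) • ρ) (c - (2 : ℤ) • ρ) = 8 * m + t + 1 - 8 * k := by
    have : dotP (c - (2 : ℤ) • ρ) (c - (2 : ℤ) • ρ) = dotP c c - 4 * dotP c ρ + 4 * dotP ρ ρ := by
      simp only [dotP_eq_dotProduct, sub_dotProduct, dotProduct_sub, smul_dotProduct,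
        dotProduct_smul, smul_eq_mul, dotProduct_comm ρ c]
      ring
    rw [this, dotP_two_mul_add_one_self hα, hcρ]
    ring
  have hchar : CharVec (c - (2 : ℤ) • ρ) := fun i =>
    (charVec_two_mul_add_one α i).sub_even (even_two_mul (ρ i))
  have hkm : (k : ℤ) ≤ m := by linarith [hchar.add_one_le_dotP_self]
  have := h.le_dotP_self (k := k) (by rw [Int.abs_natCast]; omega) hchar
    (by rw [hcρ', hcρ]; exact Int.modEq_iff_dvd.2 ⟨1, by ring⟩)
  rw [hcc', Int.natAbs_natCast] at this
  have := hV0 k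
  omega

lemma exists_mem_Sset_le_dotP_add (h : Realizes V ρ) (hσ : 2 * (g : ℤ) = dotP ρ ρ - ∑ i, ρ i)
    (hρ : ∀ i, 0 ≤ ρ i) {w : ℕ} (hw : 2 * (w : ℤ) ≤ dotP ρ ρ) :
    ∃ α ∈ Sset t (V w), (g : ℤ) ≤ dotP ρ α + w := by
  obtain ⟨α, hα, hle⟩ := h.exists_mem_Sset hρ (k := w) (by rwa [Int.abs_natCast])
  rw [Int.natAbs_natCast] at hα
  rw [Int.abs_natCast] at hle
  exact ⟨α, hα, by linarith⟩

end Realizes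

end Lattice

theorem stmt2_general (t : ℕ) (V : ℕ → ℕ) (g : ℕ)
    (hV1 : ∀ i, V (i + 1) ≤ V i)
    (hV2 : ∀ i, V i = 0 ↔ g ≤ i)
    (hV3 : ∀ i, V i ≤ V (i + 1) + 1)
    (ρ : Fin (t + 1) → ℤ)
    (hpos : ∀ i, 1 ≤ ρ i)
    (hg : 2 * (g : ℤ) ≤ dotP ρ ρ)
    (hreal : Realizes V ρ) :
    2 * (g : ℤ) = (∑ i, ρ i * (ρ i - 1)) ∧
    (∀ m : ℕ, m < V 0 →
      IsGreatest {x : ℤ | ∃ α ∈ Sset t m, x = dotP ρ α} (Tq V g m : ℤ)) ∧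
    (∃ α ∈ Sset t (V 0), (g : ℤ) ≤ dotP ρ α) := by
  have hV : Antitone V := antitone_nat_of_succ_le hV1
  have hρ : ∀ i, 0 ≤ ρ i := fun i => zero_le_one.trans (hpos i)
  have h2g := hreal.two_mul_eq_sum_mul_sub_one hV2 hpos
  have hσ : 2 * (g : ℤ) = dotP ρ ρ - ∑ i, ρ i := h2g.trans (sum_mul_sub_one_eq ρ)
  have hV0 := apply_zero_le_apply_add hV3
  have hV0g : V 0 ≤ g := by have := hV0 g; rw [(hV2 g).2 le_rfl] at this; omega
  have hupper : ∀ m < V 0, ∀ α ∈ Sset t m, dotP ρ α ≤ Tq V g m := by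
    intro m hm α hα
    have hρα := dotP_nonneg hρ hα.1
    obtain ⟨j, hj⟩ := Int.eq_ofNat_of_zero_le
      (sub_nonneg.2 (hreal.dotP_le_of_mem_Sset hσ hV0 (by omega) hm hα))
    have := (le_Tq_add_iff hV hV2 (m := m) (j := j) (by omega)).2
      (hreal.V_le_of_mem_Sset hσ hρ hg hα (by omega))
    omega
  refine ⟨h2g, fun m hm => ⟨?_, fun x ⟨α, hα, hx⟩ => hx ▸ hupper m hm α hα⟩, ?_⟩
  · obtain ⟨w, hw, hTw⟩ := exists_apply_eq_and_Tq_add_eq hV hV2 hV3 hm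
    obtain ⟨α, hα, hle⟩ := hreal.exists_mem_Sset_le_dotP_add hσ hρ (w := w) (by omega)
    rw [hw] at hα
    exact ⟨α, hα, le_antisymm (by omega) (hupper m hm α hα)⟩
  · obtain ⟨α, hα, hle⟩ := hreal.exists_mem_Sset_le_dotP_add hσ hρ (w := 0) (by omega)
    exact ⟨α, hα, by simpa using hle⟩

/-- If `ρ` realizes `(V_i)` then: (1) `2g̃ = Σ ρ_i(ρ_i − 1)`; (2) for `0 ≤ m < V_0`,
`T_m = max{ρ·α : α ∈ S_m}`; (3) `g̃ ≤ max{ρ·α : α ∈ S_{V_0}}`. -/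
theorem stmt2 (t : ℕ) (V : ℕ → ℕ) (g : ℕ)
    (hV1 : ∀ i, V (i + 1) ≤ V i)
    (hV2 : ∀ i, V i = 0 ↔ g ≤ i)
    (hV3 : ∀ i, V i ≤ V (i + 1) + 1)
    (ρ : Fin (t + 1) → ℤ)
    (hmono : ∀ i j : Fin (t + 1), i ≤ j → ρ j ≤ ρ i)
    (hpos : ∀ i, 1 ≤ ρ i)
    (hg : 2 * (g : ℤ) ≤ dotP ρ ρ)
    (hreal : Realizes V ρ) :
    2 * (g : ℤ) = (∑ i, ρ i * (ρ i - 1)) ∧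
    (∀ m : ℕ, m < V 0 →
      IsGreatest {x : ℤ | ∃ α ∈ Sset t m, x = dotP ρ α} (Tq V g m : ℤ)) ∧
    (∃ α ∈ Sset t (V 0), (g : ℤ) ≤ dotP ρ α) :=
  stmt2_general t V g hV1 hV2 hV3 ρ hpos hg hreal
end

section
/- If ρ realizes (V_i) and V_0 ≤ 1, then g̃ ≤ 3 and ρ has one of the following forms: if g̃ = 0 then ρ_i = 1 for all i; if g̃ = 1 then ρ_0 = 2 and ρ_i = 1 for all i ≥ 1; if g̃ = 2 then t ≥ 1, ρ_0 = ρ_1 = 2 and ρ_i = 1 for all i ≥ 2; if g̃ = 3 then ρ_0 = 3 and ρ_i = 1 for all i ≥ 1. -/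
theorem Int.four_mul_abs_sub_one_le_of_odd {c : ℤ} (hc : Odd c) :
    4 * (|c| - 1) ≤ c * c - 1 := by
  obtain ⟨m, hm⟩ := odd_abs.mpr hc
  have hm0 : 0 ≤ m := by have := abs_nonneg c; omega
  -- `c² - 1 - 4 (|c| - 1) = (|c| - 1) (|c| - 3)`, which is `4m (m - 1) ≥ 0` for `|c| = 2m + 1`.
  rw [← abs_mul_abs_self, hm]
  rcases eq_or_lt_of_le hm0 with rfl | hm1
  · norm_num
  · nlinarith

theorem Int.mul_sub_one_nonneg (x : ℤ) : 0 ≤ x * (x - 1) := by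
  rcases le_or_gt x 0 with hx | hx <;> nlinarith

theorem Int.sub_two_mul_le_abs_of_modEq {n k x : ℤ} (hn : 0 ≤ n) (hk : 0 ≤ k)
    (h : x ≡ n + 2 * k [ZMOD 2 * n]) : n - 2 * k ≤ |x| := by
  obtain ⟨q, hq⟩ := h.dvd
  rcases le_or_gt q 0 with hq0 | hq0
  · nlinarith [le_abs_self x]
  rcases eq_or_lt_of_le (show 1 ≤ q from hq0) with rfl | hq1
  · linarith [neg_abs_le x]
  · nlinarith [neg_abs_le x]

theorem four_mul_abs_dotP_le {t : ℕ} {c ρ : Fin (t + 1) → ℤ} {M : ℤ} (hc : CharVec c)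
    (hρ : ∀ i, 0 ≤ ρ i) (hM : ∀ i, ρ i ≤ M) :
    4 * |dotP c ρ| ≤ 4 * ∑ i, ρ i + M * (dotP c c - (t + 1)) := by
  have hterm : ∀ i, 4 * |c i * ρ i| ≤ 4 * ρ i + M * (c i * c i - 1) := fun i => by
    have hodd := Int.four_mul_abs_sub_one_le_of_odd (hc i)
    have hsq : 0 ≤ c i * c i - 1 := by
      have := Int.one_le_abs (z := c i) fun h => by simpa [h] using hc i
      linarith
    rw [abs_mul, abs_of_nonneg (hρ i)]
    calc 4 * (|c i| * ρ i) = 4 * ρ i + 4 * (|c i| - 1) * ρ i := by ring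
      _ ≤ 4 * ρ i + (c i * c i - 1) * ρ i := by gcongr; exact hρ i
      _ ≤ 4 * ρ i + M * (c i * c i - 1) := by nlinarith [hM i]
  calc 4 * |dotP c ρ| ≤ ∑ i, 4 * |c i * ρ i| := by
        rw [← Finset.mul_sum]; gcongr; exact Finset.abs_sum_le_sum_abs _ _
    _ ≤ ∑ i, (4 * ρ i + M * (c i * c i - 1)) := Finset.sum_le_sum fun i _ => hterm i
    _ = 4 * ∑ i, ρ i + M * (dotP c c - (t + 1)) := by
        simp only [dotP, Finset.sum_add_distrib, ← Finset.mul_sum, Finset.sum_sub_distrib,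
          Finset.sum_const, Finset.card_univ, Fintype.card_fin, nsmul_eq_mul]
        push_cast
        ring

theorem dotP_self_nonneg {t : ℕ} (ρ : Fin (t + 1) → ℤ) : 0 ≤ dotP ρ ρ :=
  Finset.sum_nonneg fun i _ => mul_self_nonneg (ρ i)

theorem dotP_self_sub_sum {t : ℕ} (ρ : Fin (t + 1) → ℤ) :
    dotP ρ ρ - ∑ i, ρ i = ∑ i, ρ i * (ρ i - 1) := by
  simp only [dotP, mul_sub, mul_one, Finset.sum_sub_distrib]

theorem even_dotP_self_sub_sum {t : ℕ} (ρ : Fin (t + 1) → ℤ) : Even (dotP ρ ρ - ∑ i, ρ i) := by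
  rw [dotP_self_sub_sum]
  exact Finset.even_sum _ fun i _ => Int.even_mul_pred_self (ρ i)

namespace Realizes

variable {t : ℕ} {V : ℕ → ℕ} {ρ : Fin (t + 1) → ℤ}

theorem dotP_self_sub_le (hreal : Realizes V ρ) {M : ℤ} (hρ : ∀ i, 0 ≤ ρ i)
    (hM : ∀ i, ρ i ≤ M) {k : ℕ} (hk : 2 * (k : ℤ) ≤ dotP ρ ρ) :
    dotP ρ ρ - 2 * k ≤ ∑ i, ρ i + 2 * V k * M := by
  obtain ⟨c, hc, hmod, hnorm⟩ := (hreal k (by simpa using hk)).1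
  rw [Int.natAbs_natCast] at hnorm
  have hnorm_sub : dotP c c - (t + 1) = 8 * V k := by linarith
  have hlower :=
    Int.sub_two_mul_le_abs_of_modEq (dotP_self_nonneg ρ) (Int.natCast_nonneg k) hmod
  have hupper := four_mul_abs_dotP_le hc hρ hM
  rw [hnorm_sub] at hupper
  linarith

theorem V_eq_zero_of_dotP_self_eq (hreal : Realizes V ρ) (hρ : ∀ i, 0 ≤ ρ i) {e : ℕ}
    (he : dotP ρ ρ = ∑ i, ρ i + 2 * e) : V e = 0 := by
  have hk : 2 * |-(e : ℤ)| ≤ dotP ρ ρ := by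
    rw [abs_neg, Nat.abs_cast, he]
    linarith [Finset.sum_nonneg fun i (_ : i ∈ Finset.univ) => hρ i]
  have hones : dotP (fun _ => 1) ρ = dotP ρ ρ + 2 * -(e : ℤ) := by
    rw [he]; simp [dotP]
  have hmin :=
    (hreal (-e) hk).2 ⟨fun _ => 1, fun _ => odd_one, hones ▸ Int.ModEq.refl _, rfl⟩
  simp only [Int.natAbs_neg, Int.natAbs_natCast, dotP, mul_one, Finset.sum_const,
    Finset.card_univ, Fintype.card_fin, Int.nsmul_eq_mul, Nat.cast_add, Nat.cast_one] at hmin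
  omega

theorem sum_mul_sub_one_eq (hreal : Realizes V ρ) (hρ : ∀ i, 0 ≤ ρ i) {g : ℕ}
    (hV : ∀ i, V i = 0 ↔ g ≤ i) (hg : 2 * (g : ℤ) ≤ dotP ρ ρ) :
    ∑ i, ρ i * (ρ i - 1) = 2 * g := by
  rw [← dotP_self_sub_sum]
  obtain ⟨e, he⟩ := even_dotP_self_sub_sum ρ
  have he0 : 0 ≤ e := by
    linarith [dotP_self_sub_sum ρ, Finset.sum_nonneg fun i (_ : i ∈ Finset.univ) =>
      Int.mul_sub_one_nonneg (ρ i)]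
  lift e to ℕ using he0
  have hge : g ≤ e := (hV e).mp (hreal.V_eq_zero_of_dotP_self_eq hρ (by linarith))
  have hle := hreal.dotP_self_sub_le hρ (M := ∑ j, ρ j)
    (fun i => Finset.single_le_sum (fun j _ => hρ j) (Finset.mem_univ i)) hg
  rw [(hV g).mpr le_rfl] at hle
  push_cast at hle
  omega

end Realizes

section SumMulSubOne

variable {ι : Type*} {ρ : ι → ℤ}

theorem eq_one_of_sum_mul_sub_one_eq [Fintype ι] [DecidableEq ι] (hpos : ∀ i, 1 ≤ ρ i)
    {s : Finset ι} (h : ∑ i ∈ s, ρ i * (ρ i - 1) = ∑ i, ρ i * (ρ i - 1)) {i : ι} (hi : i ∉ s) : ρ i = 1 := by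
  have hsdiff := Finset.sum_sdiff (f := fun i => ρ i * (ρ i - 1)) (Finset.subset_univ s)
  rw [h, add_eq_right] at hsdiff
  have hzero := (Finset.sum_eq_zero_iff_of_nonneg fun j _ => Int.mul_sub_one_nonneg (ρ j)).mp
    hsdiff i (by simpa using hi)
  rcases mul_eq_zero.mp hzero with h0 | h1
  · linarith [hpos i]
  · linarith

theorem exists_two_le_of_sum_mul_sub_one_ne_zero (hpos : ∀ i, 1 ≤ ρ i) {s : Finset ι}
    (h : ∑ i ∈ s, ρ i * (ρ i - 1) ≠ 0) : ∃ i ∈ s, 2 ≤ ρ i := by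
  obtain ⟨i, hi, hne⟩ := Finset.exists_ne_zero_of_sum_ne_zero h
  refine ⟨i, hi, ?_⟩
  by_contra! hlt
  exact hne (by rw [le_antisymm (by omega) (hpos i)]; norm_num)

end SumMulSubOne

section Shape

variable {t : ℕ} {ρ : Fin (t + 1) → ℤ}

theorem eq_one_of_sum_mul_sub_one_eq_head (hpos : ∀ i, 1 ≤ ρ i)
    (h : ∑ i, ρ i * (ρ i - 1) = ρ 0 * (ρ 0 - 1)) (i : Fin (t + 1)) (hi : 1 ≤ (i : ℕ)) :
    ρ i = 1 :=
  eq_one_of_sum_mul_sub_one_eq hpos (s := {0}) (by rw [Finset.sum_singleton, h])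
    (by rw [Finset.mem_singleton]; rintro rfl; simp at hi)

theorem shape_of_head_eq_two (hmono : ∀ i j : Fin (t + 1), i ≤ j → ρ j ≤ ρ i)
    (hpos : ∀ i, 1 ≤ ρ i) (h0 : ρ 0 = 2) (h : ∑ i, ρ i * (ρ i - 1) = 4) :
    1 ≤ t ∧ (∀ i : Fin (t + 1), (i : ℕ) ≤ 1 → ρ i = 2) ∧
      ∀ i : Fin (t + 1), 2 ≤ (i : ℕ) → ρ i = 1 := by
  have hrest : ∑ i ∈ Finset.univ.erase 0, ρ i * (ρ i - 1) = 2 := by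
    have := Finset.add_sum_erase Finset.univ (fun i => ρ i * (ρ i - 1)) (Finset.mem_univ 0)
    rw [h0] at this
    linarith
  obtain ⟨j, hj, hj2⟩ := exists_two_le_of_sum_mul_sub_one_ne_zero hpos (by rw [hrest]; norm_num)
  have hj1 : 1 ≤ (j : ℕ) :=
    Nat.one_le_iff_ne_zero.mpr (Fin.val_ne_of_ne (Finset.ne_of_mem_erase hj))
  have ht : 1 ≤ t := by omega
  let one : Fin (t + 1) := ⟨1, by omega⟩
  have h1 : ρ one = 2 :=
    le_antisymm (h0 ▸ hmono 0 one (Fin.zero_le _)) (hj2.trans (hmono one j hj1))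
  have hpair : ∑ i ∈ {0, one}, ρ i * (ρ i - 1) = ∑ i, ρ i * (ρ i - 1) := by
    rw [Finset.sum_pair (Fin.ne_of_val_ne zero_ne_one), h0, h1, h]
    norm_num
  refine ⟨ht, fun i hi => le_antisymm (h0 ▸ hmono 0 i (Fin.zero_le _)) (h1 ▸ hmono i one hi),
    fun i hi => eq_one_of_sum_mul_sub_one_eq hpos hpair ?_⟩
  simp only [Finset.mem_insert, Finset.mem_singleton, not_or]
  exact ⟨Fin.ne_of_val_ne (by rw [Fin.val_zero]; omega),
    Fin.ne_of_val_ne (by simp only [one]; omega)⟩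

theorem shape_of_sum_mul_sub_one_eq (hmono : ∀ i j : Fin (t + 1), i ≤ j → ρ j ≤ ρ i)
    (hpos : ∀ i, 1 ≤ ρ i) {g : ℕ} (hE : ∑ i, ρ i * (ρ i - 1) = 2 * g) (hgρ : (g : ℤ) ≤ ρ 0) :
    g ≤ 3 ∧
    (g = 0 → ∀ i, ρ i = 1) ∧
    (g = 1 → ρ 0 = 2 ∧ ∀ i : Fin (t + 1), 1 ≤ (i : ℕ) → ρ i = 1) ∧
    (g = 2 → 1 ≤ t ∧ (∀ i : Fin (t + 1), (i : ℕ) ≤ 1 → ρ i = 2) ∧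
      (∀ i : Fin (t + 1), 2 ≤ (i : ℕ) → ρ i = 1)) ∧
    (g = 3 → ρ 0 = 3 ∧ ∀ i : Fin (t + 1), 1 ≤ (i : ℕ) → ρ i = 1) := by
  obtain rfl | hg := Nat.eq_zero_or_pos g
  · refine ⟨by norm_num, fun _ i => ?_, by simp, by simp, by simp⟩
    exact eq_one_of_sum_mul_sub_one_eq hpos (s := ∅) (by simp [hE]) (Finset.notMem_empty i)
  have hhead : ρ 0 * (ρ 0 - 1) ≤ 2 * g :=
    hE ▸ Finset.single_le_sum (fun i _ => Int.mul_sub_one_nonneg (ρ i)) (Finset.mem_univ 0)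
  have h2 : 2 ≤ ρ 0 := by
    obtain ⟨i, -, hi⟩ := exists_two_le_of_sum_mul_sub_one_ne_zero hpos (s := Finset.univ)
      (by rw [hE]; omega)
    exact hi.trans (hmono 0 i (Fin.zero_le i))
  have h3 : ρ 0 ≤ 3 := by nlinarith
  obtain ⟨rfl, h⟩ | ⟨rfl, h⟩ | ⟨rfl, h⟩ :
      (g = 1 ∧ ρ 0 = 2) ∨ (g = 2 ∧ ρ 0 = 2) ∨ (g = 3 ∧ ρ 0 = 3) := by
    rcases (by omega : ρ 0 = 2 ∨ ρ 0 = 3) with h | h <;> rw [h] at hhead hgρ <;> omega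
  · refine ⟨by norm_num, by simp, fun _ => ⟨h, ?_⟩, by simp, by simp⟩
    exact eq_one_of_sum_mul_sub_one_eq_head hpos (by rw [hE, h]; norm_num)
  · refine ⟨by norm_num, by simp, by simp, fun _ => ?_, by simp⟩
    exact shape_of_head_eq_two hmono hpos h (by rw [hE]; norm_num)
  · refine ⟨by norm_num, by simp, by simp, by simp, fun _ => ⟨h, ?_⟩⟩
    exact eq_one_of_sum_mul_sub_one_eq_head hpos (by rw [hE, h]; norm_num)

end Shape

theorem stmt3_general (t : ℕ) (V : ℕ → ℕ) (g : ℕ)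
    (hV2 : ∀ i, V i = 0 ↔ g ≤ i)
    (ρ : Fin (t + 1) → ℤ)
    (hmono : ∀ i j : Fin (t + 1), i ≤ j → ρ j ≤ ρ i)
    (hpos : ∀ i, 1 ≤ ρ i)
    (hg : 2 * (g : ℤ) ≤ dotP ρ ρ)
    (hreal : Realizes V ρ)
    (hV0 : V 0 ≤ 1) :
    g ≤ 3 ∧
    (g = 0 → ∀ i, ρ i = 1) ∧
    (g = 1 → ρ 0 = 2 ∧ ∀ i : Fin (t + 1), 1 ≤ (i : ℕ) → ρ i = 1) ∧
    (g = 2 → 1 ≤ t ∧ (∀ i : Fin (t + 1), (i : ℕ) ≤ 1 → ρ i = 2) ∧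
      (∀ i : Fin (t + 1), 2 ≤ (i : ℕ) → ρ i = 1)) ∧
    (g = 3 → ρ 0 = 3 ∧ ∀ i : Fin (t + 1), 1 ≤ (i : ℕ) → ρ i = 1) := by
  have hρ : ∀ i, 0 ≤ ρ i := fun i => zero_le_one.trans (hpos i)
  have hE := hreal.sum_mul_sub_one_eq hρ hV2 hg
  have hgρ : (g : ℤ) ≤ ρ 0 := by
    have hk0 := hreal.dotP_self_sub_le hρ (fun i => hmono 0 i (Fin.zero_le i)) (k := 0)
      (by simpa using dotP_self_nonneg ρ)
    push_cast at hk0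
    have hV0ρ : (V 0 : ℤ) * ρ 0 ≤ ρ 0 :=
      mul_le_of_le_one_left (hρ 0) (by exact_mod_cast hV0)
    linarith [dotP_self_sub_sum ρ]
  exact shape_of_sum_mul_sub_one_eq hmono hpos hE hgρ

/-- If `ρ` realizes `(V_i)` and `V_0 ≤ 1`, then `g̃ ≤ 3` and `ρ` takes one of the stated
forms: `(1,…,1)` if `g̃ = 0`; `(2,1,…,1)` if `g̃ = 1`; `(2,2,1,…,1)` if `g̃ = 2`;
`(3,1,…,1)` if `g̃ = 3`. -/
theorem stmt3 (t : ℕ) (V : ℕ → ℕ) (g : ℕ)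
    (hV1 : ∀ i, V (i + 1) ≤ V i)
    (hV2 : ∀ i, V i = 0 ↔ g ≤ i)
    (hV3 : ∀ i, V i ≤ V (i + 1) + 1)
    (ρ : Fin (t + 1) → ℤ)
    (hmono : ∀ i j : Fin (t + 1), i ≤ j → ρ j ≤ ρ i)
    (hpos : ∀ i, 1 ≤ ρ i)
    (hg : 2 * (g : ℤ) ≤ dotP ρ ρ)
    (hreal : Realizes V ρ)
    (hV0 : V 0 ≤ 1) :
    g ≤ 3 ∧
    (g = 0 → ∀ i, ρ i = 1) ∧
    (g = 1 → ρ 0 = 2 ∧ ∀ i : Fin (t + 1), 1 ≤ (i : ℕ) → ρ i = 1) ∧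
    (g = 2 → 1 ≤ t ∧ (∀ i : Fin (t + 1), (i : ℕ) ≤ 1 → ρ i = 2) ∧
      (∀ i : Fin (t + 1), 2 ≤ (i : ℕ) → ρ i = 1)) ∧
    (g = 3 → ρ 0 = 3 ∧ ∀ i : Fin (t + 1), 1 ≤ (i : ℕ) → ρ i = 1) :=
  stmt3_general t V g hV2 ρ hmono hpos hg hreal hV0
end

section
/- Suppose ρ realizes (V_i), V_0 > 1 and μ > 2. Then ρ_0 ∈ {3, 4}. If ρ_0 = 3, then there exist integers d ≥ 1 and ε ∈ {0,1,2} such that exactly d coordinates of ρ equal 3, exactly ε coordinates equal 2, all remaining coordinates equal 1, and g̃ = 3d + ε. If ρ_0 = 4, then there exists an integer d ≥ 0 such that exactly one coordinate of ρ equals 4, exactly d coordinates equal 3, all remaining coordinates equal 1, and g̃ = 3d + 6. -/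
/-- When `V_0 > 1`, `μ = min{T_i − T_{i−1} : 1 ≤ i ≤ V_0 − 1}`. -/
noncomputable def muQ (V : ℕ → ℕ) (g : ℕ) : ℕ :=
  sInf {d : ℕ | ∃ i : ℕ, 1 ≤ i ∧ i ≤ V 0 - 1 ∧ d = Tq V g i - Tq V g (i - 1)}

/-!
Write a characteristic vector as `c = 2b + 1`. Then `‖c‖² = 8 cost b + t + 1`, where
`cost b = ∑ tri b_i` with `tri x = x(x+1)/2`, and `c·ρ = 2 val b + ∑ ρ_i` with `val b = b·ρ`; so
`V_k` is the least cost of a `b` with `val b ≡ g̃ - k (mod n)`. Testing this at `|k| ≥ g̃` gives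
`g̃ = ∑ tri (ρ_i - 1)` and shows that `ρ` is a changemaker. Hence, for `m < V_0`, `T_m` is the
largest value of a non-negative `b` of cost at most `m`, and `μ > 2` says that this largest value
grows by at least `3` with every unit of cost.

Take a non-negative `b` of cost at most `V_0` and value at least `g̃`, and truncate it at
`⌊ρ/3⌋`. Comparing the two leaves, when some coordinate is at least `4`, only the configurations
with one head `4`, `5` or `7`, or two heads `4, 4` or `5, 5`, all other coordinates at most `3`.
Each of them has an explicit cost level at which the largest value grows by less than `3`; so has
the case of at least three `2`s when all coordinates are at most `3`. In particular `ρ_0 = 4`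
never happens.
-/

open Finset

namespace Realization

def tri (b : ℤ) : ℤ := b * (b + 1) / 2

@[simp] lemma tri_one : tri 1 = 1 := rfl

@[simp] lemma tri_two : tri 2 = 3 := rfl

lemma two_mul_tri (b : ℤ) : 2 * tri b = b * (b + 1) := by
  have : (2 : ℤ) ∣ b * (b + 1) := (Int.even_mul_succ_self b).two_dvd
  unfold tri; omega

lemma mul_le_tri_add (k b : ℤ) : k * b ≤ tri b + tri (k - 1) := by
  have h₁ := two_mul_tri b
  have h₂ := two_mul_tri (k - 1)
  rcases le_or_gt k b with h | h <;> nlinarith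

lemma tri_nonneg (b : ℤ) : 0 ≤ tri b := by
  simpa [tri] using mul_le_tri_add 0 b

lemma tri_lower_bounds (b : ℤ) :
    b ≤ tri b ∧ 2 * b ≤ tri b + 1 ∧ 3 * b ≤ tri b + 3 := by
  refine ⟨?_, ?_, ?_⟩
  · simpa [tri] using mul_le_tri_add 1 b
  · simpa [tri] using mul_le_tri_add 2 b
  · simpa [tri] using mul_le_tri_add 3 b

lemma tri_neg_one_sub (b : ℤ) : tri (-1 - b) = tri b := by
  have h₁ := two_mul_tri b
  have h₂ := two_mul_tri (-1 - b)
  nlinarith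

lemma tri_sub_one (b : ℤ) : tri (b - 1) = tri b - b := by
  have h₁ := two_mul_tri b
  have h₂ := two_mul_tri (b - 1)
  nlinarith

lemma tri_eq_zero_iff {b : ℤ} : tri b = 0 ↔ b = 0 ∨ b = -1 := by
  have h := two_mul_tri b
  constructor
  · intro h0
    rw [h0, mul_zero, eq_comm, mul_eq_zero] at h
    omega
  · rintro (rfl | rfl) <;> rfl

lemma two_mul_add_one_mul_self (b : ℤ) : (2 * b + 1) * (2 * b + 1) = 8 * tri b + 1 := by
  nlinarith [two_mul_tri b]

/-- `T(r - 1) = r ⌊r/3⌋ + defect r`, where `r ⌊r/3⌋` is the value of a coordinate `r` at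
`b = ⌊r/3⌋`. -/
def defect (r : ℤ) : ℤ := tri (r - 1) - r * (r / 3)

lemma defect_cases {r : ℤ} (hr : 1 ≤ r) :
    r = 1 ∧ defect r = 0 ∨ r = 2 ∧ defect r = 1 ∨ r = 3 ∧ defect r = 0 ∨
    r = 4 ∧ defect r = 2 ∨ r = 5 ∧ defect r = 5 ∨ r = 6 ∧ defect r = 3 ∨
    r = 7 ∧ defect r = 7 ∨ r = 8 ∧ defect r = 12 ∨
    9 ≤ r ∧ 3 ≤ defect r ∧ (r % 3 ≠ 0 → r + 2 ≤ defect r) := by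
  rcases le_or_gt r 8 with h8 | h9
  · interval_cases r <;> norm_num [defect, tri]
  · -- with `q = r / 3`, `2 defect r = r (r - 1 - 2q)` and `r - 1 - 2q ≥ q - 1`
    have h₁ := two_mul_tri (r - 1)
    obtain ⟨q, hq⟩ : ∃ q, q = r / 3 := ⟨_, rfl⟩
    have hq₁ : 3 * q ≤ r := by omega
    have hq₂ : r ≤ 3 * q + 2 := by omega
    have hq₃ : 3 ≤ q := by omega
    unfold defect
    rw [← hq]
    iterate 8 right
    refine ⟨by omega, ?_, fun h => ?_⟩
    · nlinarith [mul_le_mul_of_nonneg_left (show q - 1 ≤ r - 1 - 2 * q by omega)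
        (show 0 ≤ r by omega)]
    · nlinarith [mul_le_mul_of_nonneg_left (show q ≤ r - 1 - 2 * q by omega)
        (show 0 ≤ r by omega)]

lemma slack_bounds {r β u : ℤ} (h₀ : 0 ≤ β) (h₁ : 3 * β ≤ r) (h₂ : r ≤ 3 * β + 2)
    (hu : β + 1 ≤ u) :
    3 * β + 3 - r ≤ 3 * (tri u - tri β) - r * (u - β) ∧
    (β + 2 ≤ u → 5 ≤ 3 * (tri u - tri β) - r * (u - β)) ∧ 1 ≤ tri u - tri β := by
  have hu' := two_mul_tri u
  have hβ := two_mul_tri β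
  refine ⟨?_, fun h => ?_, ?_⟩ <;> nlinarith [sq_nonneg (u - β - 1), sq_nonneg (u - β - 2)]

lemma two_mul_mul_le_of_le_three {r b : ℤ} (hr₁ : 1 ≤ r) (hr₃ : r ≤ 3) (hb : 0 ≤ b) :
    2 * (b * r) ≤ 3 * tri b + 3 * (if r = 3 ∧ 1 ≤ b then 1 else 0) +
      (if r = 2 ∧ 1 ≤ b then 1 else 0) ∧
    (if r = 3 ∧ 1 ≤ b then 1 else 0) + (if r = 2 ∧ 1 ≤ b then 1 else 0) ≤ tri b := by
  have hT := two_mul_tri b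
  obtain ⟨h₁, h₂, -⟩ := tri_lower_bounds b
  obtain rfl | rfl | rfl : r = 1 ∨ r = 2 ∨ r = 3 := by omega
  all_goals
    rcases lt_or_ge b 1 with hb₁ | hb₁
    · obtain rfl : b = 0 := by omega
      norm_num [tri]
    · simp only [hb₁, and_true]
      norm_num
      constructor <;> nlinarith

variable {t : ℕ}

def cost (b : Fin (t + 1) → ℤ) : ℤ := ∑ i, tri (b i)

def val (ρ b : Fin (t + 1) → ℤ) : ℤ := ∑ i, b i * ρ i

def triSum (ρ : Fin (t + 1) → ℤ) : ℤ := ∑ i, tri (ρ i - 1)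

lemma cost_nonneg (b : Fin (t + 1) → ℤ) : 0 ≤ cost b :=
  sum_nonneg fun i _ => tri_nonneg (b i)

lemma triSum_nonneg (ρ : Fin (t + 1) → ℤ) : 0 ≤ triSum ρ :=
  sum_nonneg fun _ _ => tri_nonneg _

lemma charVec_iff {c : Fin (t + 1) → ℤ} :
    CharVec c ↔ ∃ b : Fin (t + 1) → ℤ, c = fun i => 2 * b i + 1 := by
  constructor
  · intro hc
    choose b hb using hc
    exact ⟨b, funext fun i => by rw [hb i]⟩
  · rintro ⟨b, rfl⟩ i
    exact ⟨b i, rfl⟩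

lemma dotP_two_mul_add_one_self (b : Fin (t + 1) → ℤ) :
    dotP (fun i => 2 * b i + 1) (fun i => 2 * b i + 1) = 8 * cost b + (t + 1) := by
  simp only [dotP, cost, two_mul_add_one_mul_self, sum_add_distrib, mul_sum, sum_const, card_univ,
    Fintype.card_fin]
  ring

lemma dotP_two_mul_add_one (b ρ : Fin (t + 1) → ℤ) :
    dotP (fun i => 2 * b i + 1) ρ = 2 * val ρ b + ∑ i, ρ i := by
  simp only [dotP, val, mul_sum, ← sum_add_distrib]
  exact sum_congr rfl fun i _ => by ring

lemma dotP_self (ρ : Fin (t + 1) → ℤ) : dotP ρ ρ = ∑ i, ρ i + 2 * triSum ρ := by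
  simp only [dotP, triSum, mul_sum, ← sum_add_distrib]
  exact sum_congr rfl fun i _ => by linarith [two_mul_tri (ρ i - 1)]

lemma dotP_two_mul_add_one_modEq_iff (b ρ : Fin (t + 1) → ℤ) (k : ℤ) :
    dotP (fun i => 2 * b i + 1) ρ ≡ dotP ρ ρ + 2 * k [ZMOD 2 * dotP ρ ρ] ↔
      val ρ b ≡ triSum ρ + k [ZMOD dotP ρ ρ] := by
  rw [Int.modEq_iff_dvd, Int.modEq_iff_dvd, dotP_two_mul_add_one, dotP_self,
    show ∑ i, ρ i + 2 * triSum ρ + 2 * k - (2 * val ρ b + ∑ i, ρ i) =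
      2 * (triSum ρ + k - val ρ b) by ring, mul_dvd_mul_iff_left two_ne_zero]

lemma V_le_cost {V : ℕ → ℕ} {ρ : Fin (t + 1) → ℤ} (h : Realizes V ρ) {k : ℤ}
    (hk : 2 * |k| ≤ dotP ρ ρ) {b : Fin (t + 1) → ℤ}
    (hb : val ρ b ≡ triSum ρ + k [ZMOD dotP ρ ρ]) : (V k.natAbs : ℤ) ≤ cost b := by
  have := (h k hk).2 ⟨_, charVec_iff.2 ⟨b, rfl⟩, (dotP_two_mul_add_one_modEq_iff b ρ k).2 hb, rfl⟩
  rw [dotP_two_mul_add_one_self] at this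
  linarith

lemma exists_cost_eq_V {V : ℕ → ℕ} {ρ : Fin (t + 1) → ℤ} (h : Realizes V ρ) {k : ℤ}
    (hk : 2 * |k| ≤ dotP ρ ρ) :
    ∃ b, cost b = V k.natAbs ∧ val ρ b ≡ triSum ρ + k [ZMOD dotP ρ ρ] := by
  obtain ⟨c, hc, hmod, hcc⟩ := (h k hk).1
  obtain ⟨b, rfl⟩ := charVec_iff.1 hc
  rw [dotP_two_mul_add_one_self] at hcc
  exact ⟨b, by linarith, (dotP_two_mul_add_one_modEq_iff b ρ k).1 hmod⟩

lemma cost_lower_le {b : Fin (t + 1) → ℤ} {A : Finset (Fin (t + 1))} (hb : ∀ i ∈ A, 0 ≤ b i) :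
    cost (fun i => if i ∈ A then b i - 1 else b i) ≤ cost b := by
  refine sum_le_sum fun i _ => ?_
  dsimp only
  split_ifs with hi
  · rw [tri_sub_one]; linarith [hb i hi]
  · rfl

lemma val_lower (ρ b : Fin (t + 1) → ℤ) (A : Finset (Fin (t + 1))) :
    val ρ (fun i => if i ∈ A then b i - 1 else b i) = val ρ b - ∑ i ∈ A, ρ i := by
  rw [val, val, ← Fintype.sum_ite_mem A ρ, ← sum_sub_distrib]
  refine sum_congr rfl fun i _ => ?_
  split_ifs <;> ring

lemma cost_max_zero_le (b : Fin (t + 1) → ℤ) : cost (fun i => max (b i) 0) ≤ cost b :=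
  sum_le_sum fun i _ => by
    dsimp only
    rcases le_total 0 (b i) with h | h
    · rw [max_eq_left h]
    · rw [max_eq_right h]; exact tri_nonneg _

lemma val_le_val_max_zero {ρ : Fin (t + 1) → ℤ} (hρ : ∀ i, 0 ≤ ρ i) (b : Fin (t + 1) → ℤ) :
    val ρ b ≤ val ρ (fun i => max (b i) 0) :=
  sum_le_sum fun i _ => mul_le_mul_of_nonneg_right (le_max_left _ _) (hρ i)

lemma cost_neg_one_sub (b : Fin (t + 1) → ℤ) : cost (fun i => -1 - b i) = cost b :=
  sum_congr rfl fun i _ => tri_neg_one_sub (b i)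

lemma val_neg_one_sub (ρ b : Fin (t + 1) → ℤ) :
    val ρ (fun i => -1 - b i) = -∑ i, ρ i - val ρ b := by
  simp only [val, ← sum_neg_distrib, ← sum_sub_distrib]
  exact sum_congr rfl fun i _ => by ring

lemma cost_eq_cost_min_add (b β : Fin (t + 1) → ℤ) :
    cost b = cost (fun i => min (b i) (β i)) +
      ∑ i ∈ univ.filter (fun i => β i < b i), (tri (b i) - tri (β i)) := by
  rw [cost, cost, sum_filter, ← sum_add_distrib]
  refine sum_congr rfl fun i _ => ?_
  split_ifs with hi
  · rw [min_eq_right hi.le]; ring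
  · rw [min_eq_left (not_lt.1 hi)]; ring

lemma val_eq_val_min_add (ρ b β : Fin (t + 1) → ℤ) :
    val ρ b = val ρ (fun i => min (b i) (β i)) +
      ∑ i ∈ univ.filter (fun i => β i < b i), ρ i * (b i - β i) := by
  rw [val, val, sum_filter, ← sum_add_distrib]
  refine sum_congr rfl fun i _ => ?_
  split_ifs with hi
  · rw [min_eq_right hi.le]; ring
  · rw [min_eq_left (not_lt.1 hi)]; ring

lemma val_eq_of_cost_eq_zero {b : Fin (t + 1) → ℤ} (hb : cost b = 0) (ρ : Fin (t + 1) → ℤ) :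
    val ρ b = -∑ i ∈ univ.filter (b · = -1), ρ i := by
  have h0 : ∀ i, b i = 0 ∨ b i = -1 := fun i =>
    tri_eq_zero_iff.1 ((sum_eq_zero_iff_of_nonneg fun j _ => tri_nonneg (b j)).1 hb i (mem_univ i))
  rw [val, sum_filter, ← sum_neg_distrib]
  refine sum_congr rfl fun i _ => ?_
  rcases h0 i with h | h <;> simp [h]

lemma val_le_mul_cost {ρ : Fin (t + 1) → ℤ} {r : ℤ} (hr₀ : 0 ≤ r) (hr : ∀ i, ρ i ≤ r)
    {b : Fin (t + 1) → ℤ} (hb : ∀ i, 0 ≤ b i) : val ρ b ≤ r * cost b := by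
  rw [cost, mul_sum]
  refine sum_le_sum fun i _ => ?_
  nlinarith [hb i, hr i, (tri_lower_bounds (b i)).1]

def count (ρ : Fin (t + 1) → ℤ) (r : ℤ) : ℕ := (univ.filter (ρ · = r)).card

lemma sum_ite_eq_count (ρ : Fin (t + 1) → ℤ) (r c : ℤ) :
    ∑ i, (if ρ i = r then c else 0) = c * count ρ r := by
  rw [← sum_filter, sum_const, count, nsmul_eq_mul, mul_comm]

lemma count_eq_zero_iff {ρ : Fin (t + 1) → ℤ} {r : ℤ} : count ρ r = 0 ↔ ∀ i, ρ i ≠ r := by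
  simp [count, filter_eq_empty_iff]

/-- The witness is `a` on `H`, `1` on the other coordinates equal to `3`, and `0` elsewhere. -/
lemma exists_heads_witness {ρ : Fin (t + 1) → ℤ} (H : Finset (Fin (t + 1))) (hH : ∀ i ∈ H, ρ i ≠ 3)
    (a : Fin (t + 1) → ℤ) (ha : ∀ i ∈ H, 0 ≤ a i) :
    ∃ w, (∀ i, 0 ≤ w i) ∧ cost w = ∑ i ∈ H, tri (a i) + count ρ 3 ∧
      val ρ w = ∑ i ∈ H, a i * ρ i + 3 * count ρ 3 := by
  refine ⟨fun i => if i ∈ H then a i else if ρ i = 3 then 1 else 0, fun i => ?_, ?_, ?_⟩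
  · dsimp only; split_ifs with h₁ <;> first | exact ha i h₁ | norm_num
  · rw [cost, ← Fintype.sum_ite_mem H (fun i => tri (a i)), ← one_mul (count ρ 3 : ℤ),
      ← sum_ite_eq_count, ← sum_add_distrib]
    refine sum_congr rfl fun i _ => ?_
    by_cases hi : i ∈ H
    · simp [hi, hH i hi]
    · by_cases h3 : ρ i = 3 <;> simp [hi, h3, tri]
  · rw [val, ← Fintype.sum_ite_mem H (fun i => a i * ρ i), ← sum_ite_eq_count,
      ← sum_add_distrib]
    refine sum_congr rfl fun i _ => ?_
    by_cases hi : i ∈ H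
    · simp [hi, hH i hi]
    · by_cases h3 : ρ i = 3 <;> simp [hi, h3]

def HeadConfig (ρ : Fin (t + 1) → ℤ) : Prop :=
  (∃ j, (ρ j = 4 ∨ ρ j = 5 ∨ ρ j = 7 ∧ count ρ 2 = 0) ∧ ∀ i ≠ j, ρ i ≤ 3) ∨
  ∃ j k, j ≠ k ∧ (ρ j = 4 ∧ ρ k = 4 ∨ ρ j = 5 ∧ ρ k = 5) ∧
    (∀ i, i ≠ j → i ≠ k → ρ i ≤ 3) ∧ count ρ 2 = 0

section HeadConfig

variable {ρ : Fin (t + 1) → ℤ} (h₁ : ∀ i, 1 ≤ ρ i)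
include h₁

lemma count_two_eq_zero {j k : Fin (t + 1)} (hj : ρ j ≠ 2) (hk : ρ k ≠ 2)
    (hrest : ∀ i, i ≠ j → i ≠ k → defect (ρ i) ≤ 0) : count ρ 2 = 0 :=
  count_eq_zero_iff.2 fun i => by
    by_cases hij : i = j
    · rwa [hij]
    by_cases hik : i = k
    · rwa [hik]
    have := hrest i hij hik
    have := defect_cases (h₁ i)
    omega

lemma headConfig_of_defect_le_singleton {j : Fin (t + 1)} (hσ : 3 * (ρ j / 3) + 3 - ρ j ≤ 2)
    (hone : ∀ i ≠ j, defect (ρ i) ≤ ρ j - defect (ρ j))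
    (hpair : ∀ i i', i ≠ j → i' ≠ j → i ≠ i' →
      defect (ρ i) + defect (ρ i') ≤ ρ j - defect (ρ j))
    (hP₀ : 0 ≤ ρ j - defect (ρ j)) {i₀ : Fin (t + 1)} (h₄ : 4 ≤ ρ i₀) : HeadConfig ρ := by
  have hc := fun i => defect_cases (h₁ i)
  have hcj := hc j
  have hj : ρ j = 4 ∨ ρ j = 5 ∨ ρ j = 7 := by
    rcases eq_or_ne i₀ j with rfl | hne
    · omega
    · have := hone i₀ hne
      have := hc i₀
      omega
  rcases hj with hj | hj
  · by_cases hex : ∃ i ≠ j, 4 ≤ ρ i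
    · obtain ⟨i, hij, hi⟩ := hex
      have hci := hc i
      have hρi : ρ i = 4 := by have := hone i hij; omega
      have hrest : ∀ i', i' ≠ j → i' ≠ i → defect (ρ i') ≤ 0 := fun i' h₁ h₂ => by
        have := hpair i i' hij h₁ (Ne.symm h₂)
        omega
      refine Or.inr ⟨j, i, Ne.symm hij, Or.inl ⟨hj, hρi⟩, fun i' h₁ h₂ => ?_,
        count_two_eq_zero h₁ (by omega) (by omega) hrest⟩
      have := hrest i' h₁ h₂
      have := hc i'
      omega
    · push Not at hex
      exact Or.inl ⟨j, Or.inl hj, fun i hi => by have := hex i hi; omega⟩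
  · have hrest : ∀ i ≠ j, defect (ρ i) ≤ 0 := fun i hi => by have := hone i hi; omega
    refine Or.inl ⟨j, ?_, fun i hi => by have := hrest i hi; have := hc i; omega⟩
    rcases hj with hj | hj
    · exact Or.inr (Or.inl hj)
    · exact Or.inr (Or.inr ⟨hj, count_two_eq_zero h₁ (j := j) (k := j) (by omega) (by omega)
        fun i hi _ => hrest i hi⟩)

lemma headConfig_of_defect_le_pair {j k : Fin (t + 1)} (hjk : j ≠ k)
    (hσ : 3 * (ρ j / 3) + 3 - ρ j + (3 * (ρ k / 3) + 3 - ρ k) ≤ 2)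
    (hone : ∀ i, i ≠ j → i ≠ k → defect (ρ i) ≤ ρ j - defect (ρ j) + (ρ k - defect (ρ k)))
    (hpair : ∀ i i', i ≠ j → i ≠ k → i' ≠ j → i' ≠ k → i ≠ i' →
      defect (ρ i) + defect (ρ i') ≤ ρ j - defect (ρ j) + (ρ k - defect (ρ k)))
    (hP₀ : 0 ≤ ρ j - defect (ρ j) + (ρ k - defect (ρ k))) {i₀ : Fin (t + 1)} (h₄ : 4 ≤ ρ i₀) :
    HeadConfig ρ := by
  have hc := fun i => defect_cases (h₁ i)
  obtain ⟨hj, hk⟩ : (ρ j = 2 ∨ ρ j = 5) ∧ (ρ k = 2 ∨ ρ k = 5) := by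
    have := hc j; have := hc k; omega
  have hDj : defect (ρ j) = if ρ j = 2 then 1 else 5 := by
    rcases hj with hj | hj <;> simp [hj, defect, tri]
  have hDk : defect (ρ k) = if ρ k = 2 then 1 else 5 := by
    rcases hk with hk | hk <;> simp [hk, defect, tri]
  rcases hj with hj | hj <;> rcases hk with hk | hk <;>
    simp only [hj, hk, if_true, show (5 : ℤ) ≠ 2 by norm_num, if_false] at hDj hDk hone hpair
  · have hi₀j : i₀ ≠ j := by rintro rfl; omega
    have hi₀k : i₀ ≠ k := by rintro rfl; omega
    have hci₀ := hc i₀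
    have hρi₀ : ρ i₀ = 4 := by have := hone i₀ hi₀j hi₀k; omega
    refine Or.inl ⟨i₀, Or.inl hρi₀, fun i hi => ?_⟩
    by_cases hij : i = j
    · rw [hij]; omega
    by_cases hik : i = k
    · rw [hik]; omega
    have := hpair i₀ i hi₀j hi₀k hij hik (Ne.symm hi)
    have := hc i
    omega
  · refine Or.inl ⟨k, Or.inr (Or.inl hk), fun i hi => ?_⟩
    by_cases hij : i = j
    · rw [hij]; omega
    have := hone i hij hi; have := hc i; omega
  · refine Or.inl ⟨j, Or.inr (Or.inl hj), fun i hi => ?_⟩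
    by_cases hik : i = k
    · rw [hik]; omega
    have := hone i hi hik; have := hc i; omega
  · have hrest : ∀ i, i ≠ j → i ≠ k → defect (ρ i) ≤ 0 := fun i h₁ h₂ => by
      have := hone i h₁ h₂; omega
    refine Or.inr ⟨j, k, hjk, Or.inr ⟨hj, hk⟩,
      fun i h₁ h₂ => by have := hrest i h₁ h₂; have := hc i; omega,
      count_two_eq_zero h₁ (by omega) (by omega) hrest⟩

/-- With `P = ∑_{i ∈ X} (ρ_i - defect ρ_i)`, the hypothesis `hD` says that the defects off `X`
add up to at most `P`, and `hσ` that `X` has at most two elements. -/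
lemma headConfig_of_sum_defect_le {X : Finset (Fin (t + 1))}
    (hσ : ∑ i ∈ X, (3 * (ρ i / 3) + 3 - ρ i) ≤ 2) (hD : ∑ i, defect (ρ i) ≤ ∑ i ∈ X, ρ i)
    {i₀ : Fin (t + 1)} (h₄ : 4 ≤ ρ i₀) : HeadConfig ρ := by
  have hD₀ : ∀ i, 0 ≤ defect (ρ i) := fun i => by have := defect_cases (h₁ i); omega
  have hout : ∑ i ∈ Xᶜ, defect (ρ i) ≤ ∑ i ∈ X, (ρ i - defect (ρ i)) := by
    rw [← sum_add_sum_compl X] at hD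
    rw [sum_sub_distrib]
    linarith
  have hone : ∀ i ∉ X, defect (ρ i) ≤ ∑ i ∈ X, (ρ i - defect (ρ i)) := fun i hi =>
    (single_le_sum (fun j _ => hD₀ j) (mem_compl.2 hi)).trans hout
  have hpair : ∀ i i', i ∉ X → i' ∉ X → i ≠ i' →
      defect (ρ i) + defect (ρ i') ≤ ∑ i ∈ X, (ρ i - defect (ρ i)) := fun i i' hi hi' hii' => by
    rw [← sum_pair hii' (f := fun i => defect (ρ i))]
    refine (sum_le_sum_of_subset_of_nonneg (fun x hx => ?_) fun j _ _ => hD₀ j).trans hout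
    rcases mem_insert.1 hx with rfl | hx
    · exact mem_compl.2 hi
    · rw [mem_singleton.1 hx]; exact mem_compl.2 hi'
  have hP₀ := (sum_nonneg fun i _ => hD₀ i).trans hout
  have hcard : X.card ≤ 2 := by
    have : ∑ i ∈ X, (1 : ℤ) ≤ ∑ i ∈ X, (3 * (ρ i / 3) + 3 - ρ i) :=
      sum_le_sum fun i _ => by omega
    simp only [sum_const, nsmul_eq_mul, mul_one] at this
    omega
  obtain hX | hX | hX : X.card = 0 ∨ X.card = 1 ∨ X.card = 2 := by omega
  · rw [card_eq_zero] at hX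
    have h₀ := hone i₀ (by simp [hX])
    simp only [hX, sum_empty] at h₀
    have := defect_cases (h₁ i₀)
    omega
  · obtain ⟨j, rfl⟩ := card_eq_one.1 hX
    simp only [mem_singleton, sum_singleton] at hσ hone hpair hP₀
    exact headConfig_of_defect_le_singleton h₁ hσ hone (fun i i' hi hi' => hpair i i' hi hi') hP₀ h₄
  · obtain ⟨j, k, hjk, rfl⟩ := card_eq_two.1 hX
    simp only [mem_insert, mem_singleton, not_or, sum_pair hjk] at hσ hone hpair hP₀
    exact headConfig_of_defect_le_pair h₁ hjk hσ (fun i hj hk => hone i ⟨hj, hk⟩)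
      (fun i i' hj hk hj' hk' => hpair i i' ⟨hj, hk⟩ ⟨hj', hk'⟩) hP₀ h₄

end HeadConfig

lemma Tq_mono (V : ℕ → ℕ) (g : ℕ) {m m' : ℕ} (hm : m ≤ m') : Tq V g m ≤ Tq V g m' :=
  card_le_card fun i hi => by
    simp only [mem_filter] at hi ⊢
    exact ⟨hi.1, hi.2.1, hi.2.2.trans hm⟩

lemma Tq_pred_add_three_le {V : ℕ → ℕ} {g : ℕ} (hmu : 2 < muQ V g) {m : ℕ} (hm₁ : 1 ≤ m)
    (hm : m ≤ V 0 - 1) :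
    Tq V g (m - 1) + 3 ≤ Tq V g m := by
  have := Nat.sInf_le (show Tq V g m - Tq V g (m - 1) ∈
    {d | ∃ i, 1 ≤ i ∧ i ≤ V 0 - 1 ∧ d = Tq V g i - Tq V g (i - 1)} from ⟨m, hm₁, hm, rfl⟩)
  have := Tq_mono V g (m.sub_le 1)
  unfold muQ at hmu
  omega

lemma Tq_add_three_mul_le {V : ℕ → ℕ} {g : ℕ} (hmu : 2 < muQ V g) {m j : ℕ} (hj : m + j ≤ V 0 - 1) :
    Tq V g m + 3 * j ≤ Tq V g (m + j) := by
  induction j with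
  | zero => simp
  | succ j ih =>
    have := Tq_pred_add_three_le hmu (m := m + j + 1) (by omega) (by omega)
    rw [Nat.add_sub_cancel] at this
    rw [← add_assoc]
    omega

structure Setup (V : ℕ → ℕ) (g : ℕ) (ρ : Fin (t + 1) → ℤ) : Prop where
  antitone : Antitone V
  eq_zero_iff : ∀ i, V i = 0 ↔ g ≤ i
  one_le : ∀ i, 1 ≤ ρ i
  realizes : Realizes V ρ

namespace Setup

variable {V : ℕ → ℕ} {g : ℕ} {ρ : Fin (t + 1) → ℤ} (h : Setup V g ρ)
include h

lemma nonneg (i : Fin (t + 1)) : 0 ≤ ρ i := by linarith [h.one_le i]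

lemma zero_le_sum : 0 ≤ ∑ i, ρ i := sum_nonneg fun i _ => h.nonneg i

lemma subset_sum_mem_Icc (A : Finset (Fin (t + 1))) :
    ∑ i ∈ A, ρ i ∈ Set.Icc 0 (∑ i, ρ i) :=
  ⟨sum_nonneg fun i _ => h.nonneg i,
    sum_le_sum_of_subset_of_nonneg (subset_univ A) fun i _ _ => h.nonneg i⟩

lemma exists_subset_sum_dvd {k : ℤ} (hk : 2 * |k| ≤ dotP ρ ρ) (hV : V k.natAbs = 0) :
    ∃ A : Finset (Fin (t + 1)), dotP ρ ρ ∣ ∑ i ∈ A, ρ i + triSum ρ + k := by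
  obtain ⟨b, hb, hmod⟩ := exists_cost_eq_V h.realizes hk
  rw [hV, Nat.cast_zero] at hb
  refine ⟨univ.filter (b · = -1), ?_⟩
  have := Int.modEq_iff_dvd.1 hmod
  rwa [val_eq_of_cost_eq_zero hb, sub_neg_eq_add, add_comm, ← add_assoc] at this

lemma g_eq : (g : ℤ) = triSum ρ := by
  have hs := h.zero_le_sum
  have hG := triSum_nonneg ρ
  have hn := dotP_self ρ
  apply le_antisymm
  · have hk : 2 * |-triSum ρ| ≤ dotP ρ ρ := by rw [abs_neg, abs_of_nonneg hG]; linarith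
    have hV := V_le_cost h.realizes hk (b := 0) (by simp [val, Int.ModEq])
    have hcost : cost (0 : Fin (t + 1) → ℤ) = 0 := by simp [cost, tri]
    rw [hcost, Int.natAbs_neg] at hV
    have hg := (h.eq_zero_iff (triSum ρ).natAbs).1 (by omega)
    omega
  · by_contra! hlt
    have hk : 2 * |triSum ρ - 1| ≤ dotP ρ ρ := by rw [abs_of_nonneg (by omega)]; linarith
    obtain ⟨A, hA⟩ := h.exists_subset_sum_dvd hk ((h.eq_zero_iff _).2 (by omega))
    obtain ⟨hA₀, hA₁⟩ := h.subset_sum_mem_Icc A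
    have := Int.le_of_dvd (by omega) hA
    omega

lemma dotP_self_eq : dotP ρ ρ = ∑ i, ρ i + 2 * g := by
  rw [dotP_self, h.g_eq]

lemma exists_subset_sum (hg : 0 < g) {x : ℤ} (hx₀ : 0 ≤ x) (hxs : x ≤ ∑ i, ρ i) :
    ∃ A : Finset (Fin (t + 1)), ∑ i ∈ A, ρ i = x := by
  have hn := h.dotP_self_eq
  have hG := h.g_eq
  -- a `k` with `|k| ≥ g`, so that `V_{|k|} = 0`, and `k ≡ -g - x (mod n)`
  obtain ⟨k, hk, hkg, hkx⟩ : ∃ k : ℤ, 2 * |k| ≤ dotP ρ ρ ∧ (g : ℤ) ≤ |k| ∧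
      dotP ρ ρ ∣ k + g + x := by
    rcases le_or_gt (2 * x) (∑ i, ρ i) with hx | hx
    · exact ⟨-(g + x), by rw [abs_neg, abs_of_nonneg (by omega)]; omega,
        by rw [abs_neg, abs_of_nonneg (by omega)]; omega, by simp⟩
    · exact ⟨g + (∑ i, ρ i) - x, by rw [abs_of_nonneg (by omega)]; omega,
        by rw [abs_of_nonneg (by omega)]; omega, ⟨1, by rw [hn]; ring⟩⟩
  obtain ⟨A, hA⟩ := h.exists_subset_sum_dvd hk
    ((h.eq_zero_iff _).2 (by have := Int.natCast_natAbs k; omega))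
  obtain ⟨hA₀, hA₁⟩ := h.subset_sum_mem_Icc A
  refine ⟨A, sub_eq_zero.1 (Int.eq_zero_of_abs_lt_dvd (m := dotP ρ ρ) ?_ ?_)⟩
  · have := dvd_sub hA hkx
    rwa [← hG, show ∑ i ∈ A, ρ i + g + k - (k + g + x) = ∑ i ∈ A, ρ i - x by ring] at this
  · rw [abs_lt]; constructor <;> omega

lemma exists_val_eq_of_le_add (hg : 0 < g) {b : Fin (t + 1) → ℤ} (hb : ∀ i, 0 ≤ b i) {y : ℤ}
    (hy : y ≤ val ρ b) (hys : val ρ b ≤ y + ∑ i, ρ i) :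
    ∃ b', cost b' ≤ cost b ∧ val ρ b' = y := by
  obtain ⟨A, hA⟩ := h.exists_subset_sum hg (x := val ρ b - y) (by linarith) (by linarith)
  exact ⟨_, cost_lower_le fun i _ => hb i, by rw [val_lower, hA]; ring⟩

/-- Lower `b` by one at single coordinates until the remaining difference is a subset sum of
`ρ`, and then lower `b` by one on that subset. -/
lemma exists_val_eq (hg : 0 < g) {b : Fin (t + 1) → ℤ} (hb : ∀ i, 0 ≤ b i) {y : ℤ}
    (hy₀ : 0 ≤ y) (hy : y ≤ val ρ b) : ∃ b', cost b' ≤ cost b ∧ val ρ b' = y := by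
  obtain ⟨N, hN⟩ : ∃ N : ℕ, ∑ i, b i ≤ N := ⟨_, Int.self_le_toNat _⟩
  induction N generalizing b with
  | zero =>
    have hb0 : ∀ i, b i = 0 := fun i =>
      le_antisymm ((single_le_sum (fun j _ => hb j) (mem_univ i)).trans (by simpa using hN)) (hb i)
    have hs := h.zero_le_sum
    exact h.exists_val_eq_of_le_add hg hb hy (by simp [val, hb0]; linarith)
  | succ N ih =>
    by_cases hys : val ρ b ≤ y + ∑ i, ρ i
    · exact h.exists_val_eq_of_le_add hg hb hy hys
    obtain ⟨i, hi⟩ : ∃ i, 1 ≤ b i := by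
      by_contra! hall
      have hb0 : val ρ b = 0 :=
        sum_eq_zero fun j _ => by rw [le_antisymm (by linarith [hall j]) (hb j), zero_mul]
      linarith [h.zero_le_sum]
    have hρi := single_le_sum (fun j _ => h.nonneg j) (mem_univ i)
    obtain ⟨b', hc, hv⟩ := ih (b := fun j => if j ∈ ({i} : Finset _) then b j - 1 else b j)
      (fun j => by
        split_ifs with hj
        · rw [mem_singleton.1 hj]; linarith
        · exact hb j)
      (by rw [val_lower, sum_singleton]; linarith)
      (by
        have : ∑ j, (if j ∈ ({i} : Finset _) then b j - 1 else b j) = ∑ j, b j - 1 := by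
          simpa [val] using val_lower (fun _ => 1) b {i}
        push_cast at hN; linarith)
    exact ⟨b', hc.trans (cost_lower_le (by simpa using hb i)), hv⟩

lemma V_le_cost_of_val_eq {k : ℕ} (hk : k ≤ g) {b : Fin (t + 1) → ℤ}
    (hb : val ρ b = g - k) : (V k : ℤ) ≤ cost b := by
  have hs := h.zero_le_sum
  have := V_le_cost h.realizes (k := -k) (by rw [abs_neg, Nat.abs_cast, h.dotP_self_eq]; omega)
    (by rw [hb, ← h.g_eq, ← sub_eq_add_neg])
  rwa [Int.natAbs_neg, Int.natAbs_natCast] at this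

/-- Of a minimizer `b` for `V_k` and its reflection `-1 - b`, of the same cost, one has value
at least `g̃ - k`; its positive part works. -/
lemma exists_nonneg_cost_le_V {k : ℕ} (hk : k ≤ g) :
    ∃ b, (∀ i, 0 ≤ b i) ∧ cost b ≤ V k ∧ (g : ℤ) - k ≤ val ρ b := by
  have hs := h.zero_le_sum
  have hn := h.dotP_self_eq
  obtain ⟨b, hb, hmod⟩ := exists_cost_eq_V h.realizes (k := -k)
    (by rw [abs_neg, Nat.abs_cast, hn]; omega)
  rw [Int.natAbs_neg, Int.natAbs_natCast, ← h.g_eq] at *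
  obtain ⟨j, hj⟩ := (Int.modEq_iff_dvd.1 hmod.symm)
  suffices ∃ b', cost b' ≤ V k ∧ (g : ℤ) - k ≤ val ρ b' from
    let ⟨b', hc, hv⟩ := this
    ⟨_, fun i => le_max_right _ _, (cost_max_zero_le b').trans hc,
      hv.trans (val_le_val_max_zero h.nonneg b')⟩
  rcases le_or_gt 0 j with hj0 | hj0
  · exact ⟨b, hb.le, by nlinarith⟩
  · refine ⟨_, (cost_neg_one_sub b).trans_le hb.le, ?_⟩
    rw [val_neg_one_sub]
    nlinarith

lemma pos_of_V_zero_ne (hV : V 0 ≠ 0) : 0 < g := by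
  by_contra! hg
  exact hV ((h.eq_zero_iff 0).2 hg)

lemma Tq_eq_card (m : ℕ) : Tq V g m = ((range g).filter (V · ≤ m)).card := by
  refine congrArg card (filter_congr fun i hi => ?_)
  have := (h.eq_zero_iff i).not.2 (by simpa using hi)
  omega

lemma Tq_lt (hg : 0 < g) {m : ℕ} (hm : m < V 0) : Tq V g m < g := by
  rw [h.Tq_eq_card]
  refine (card_lt_card ⟨filter_subset _ _, fun hsub => ?_⟩).trans_le (card_range g).le
  have := (mem_filter.1 (hsub (mem_range.2 hg))).2
  omega

lemma le_Tq (hg : 0 < g) {m : ℕ} {b : Fin (t + 1) → ℤ} (hb : ∀ i, 0 ≤ b i)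
    (hc : cost b ≤ m) {W : ℕ} (hW : W ≤ val ρ b) (hWg : W ≤ g) : W ≤ Tq V g m := by
  rw [h.Tq_eq_card]
  have hsub : Ico (g - W) g ⊆ (range g).filter (V · ≤ m) := fun k hk => by
    rw [mem_Ico] at hk
    obtain ⟨b', hc', hv'⟩ := h.exists_val_eq hg hb (y := g - k) (by omega) (by omega)
    have := h.V_le_cost_of_val_eq hk.2.le (b := b') (by rw [hv'])
    simp only [mem_filter, mem_range]
    omega
  have := card_le_card hsub
  rw [Nat.card_Ico] at this
  omega

lemma val_le_Tq (hg : 0 < g) {m : ℕ} (hm : m < V 0) {b : Fin (t + 1) → ℤ}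
    (hb : ∀ i, 0 ≤ b i) (hc : cost b ≤ m) : val ρ b ≤ Tq V g m := by
  by_contra! hlt
  have := h.le_Tq hg hb hc (W := Tq V g m + 1) (by push_cast; omega) (h.Tq_lt hg hm)
  omega

lemma exists_Tq_le_val (m : ℕ) :
    ∃ b, (∀ i, 0 ≤ b i) ∧ cost b ≤ m ∧ (Tq V g m : ℤ) ≤ val ρ b := by
  have hTg : Tq V g m ≤ g := by
    rw [h.Tq_eq_card]; exact (card_filter_le _ _).trans (card_range g).le
  -- the `i < g` with `V i ≤ m` form a final segment of `range g`, starting at `g - T_m`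
  have hV : V (g - Tq V g m) ≤ m := by
    rcases Nat.eq_zero_or_pos (Tq V g m) with h0 | hpos
    · rw [h0, Nat.sub_zero, (h.eq_zero_iff g).2 le_rfl]
      exact Nat.zero_le m
    by_contra! hlt
    have hsub : (range g).filter (V · ≤ m) ⊆ Ico (g - Tq V g m + 1) g := fun i hi => by
      simp only [mem_filter, mem_range] at hi
      have : ¬ i ≤ g - Tq V g m := fun hle => by have := h.antitone hle; omega
      simp only [mem_Ico]
      omega
    have := card_le_card hsub
    rw [← h.Tq_eq_card, Nat.card_Ico] at this
    omega
  obtain ⟨b, hb, hc, hv⟩ := h.exists_nonneg_cost_le_V (Nat.sub_le g (Tq V g m))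
  exact ⟨b, hb, hc.trans (by exact_mod_cast hV), by push_cast [hTg] at hv; linarith⟩

lemma tri_pred_eq_of_le_three {i : Fin (t + 1)} (hi : ρ i ≤ 3) :
    tri (ρ i - 1) = (if ρ i = 3 then 3 else 0) + (if ρ i = 2 then 1 else 0) := by
  have := h.one_le i
  obtain h₁ | h₁ | h₁ : ρ i = 1 ∨ ρ i = 2 ∨ ρ i = 3 := by omega
  all_goals rw [h₁]; norm_num [tri]

lemma g_eq_of_heads (H : Finset (Fin (t + 1))) (hH : ∀ i ∈ H, 4 ≤ ρ i)
    (hS : ∀ i ∉ H, ρ i ≤ 3) :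
    (g : ℤ) = ∑ i ∈ H, tri (ρ i - 1) + 3 * count ρ 3 + count ρ 2 := by
  have key : ∀ i, tri (ρ i - 1) = (if i ∈ H then tri (ρ i - 1) else 0) +
      (if ρ i = 3 then 3 else 0) + (if ρ i = 2 then 1 else 0) := fun i => by
    by_cases hi : i ∈ H
    · have := hH i hi
      simp [hi, show ρ i ≠ 3 by omega, show ρ i ≠ 2 by omega]
    · simp only [hi, if_false, zero_add]
      exact h.tri_pred_eq_of_le_three (hS i hi)
  rw [h.g_eq, triSum, sum_congr rfl fun i _ => key i, sum_add_distrib, sum_add_distrib,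
    Fintype.sum_ite_mem, sum_ite_eq_count, sum_ite_eq_count, one_mul]

/-- `A` and `B` count the coordinates off `H` that equal `3`, resp. `2`, and on which `b` is
positive. -/
lemma two_mul_val_le_of_heads (H : Finset (Fin (t + 1))) (hS : ∀ i ∉ H, ρ i ≤ 3)
    {b : Fin (t + 1) → ℤ} (hb : ∀ i, 0 ≤ b i) :
    ∃ cs A B : ℤ, 0 ≤ A ∧ 0 ≤ B ∧ A ≤ count ρ 3 ∧ B ≤ count ρ 2 ∧ A + B ≤ cs ∧
      cost b = ∑ i ∈ H, tri (b i) + cs ∧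
      2 * val ρ b ≤ ∑ i ∈ H, 2 * (b i * ρ i) + 3 * cs + 3 * A + B := by
  set a : Fin (t + 1) → ℤ := fun i => if ρ i = 3 ∧ 1 ≤ b i then 1 else 0
  set e : Fin (t + 1) → ℤ := fun i => if ρ i = 2 ∧ 1 ≤ b i then 1 else 0
  have hle (r : ℤ) (f : Fin (t + 1) → ℤ) (hf : ∀ i, f i = if ρ i = r ∧ 1 ≤ b i then 1 else 0) :
      ∑ i ∈ Hᶜ, f i ≤ count ρ r := by
    rw [← one_mul (count ρ r : ℤ), ← sum_ite_eq_count]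
    refine (sum_le_sum_of_subset_of_nonneg (subset_univ _) fun i _ _ => ?_).trans
      (sum_le_sum fun i _ => ?_) <;> rw [hf] <;> split_ifs <;> simp_all
  have hper := fun i (hi : i ∈ Hᶜ) =>
    two_mul_mul_le_of_le_three (h.one_le i) (hS i (mem_compl.1 hi)) (hb i)
  refine ⟨∑ i ∈ Hᶜ, tri (b i), ∑ i ∈ Hᶜ, a i, ∑ i ∈ Hᶜ, e i,
    sum_nonneg fun i _ => by positivity, sum_nonneg fun i _ => by positivity,
    hle 3 a fun _ => rfl, hle 2 e fun _ => rfl,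
    by rw [← sum_add_distrib]; exact sum_le_sum fun i hi => (hper i hi).2,
    (sum_add_sum_compl H _).symm, ?_⟩
  have hcompl : ∑ i ∈ Hᶜ, 2 * (b i * ρ i) ≤
      ∑ i ∈ Hᶜ, (3 * tri (b i) + 3 * a i + e i) := sum_le_sum fun i hi => (hper i hi).1
  rw [sum_add_distrib, sum_add_distrib] at hcompl
  rw [val, ← sum_add_sum_compl H, mul_add, mul_sum, mul_sum]
  linarith [mul_sum Hᶜ (fun i => tri (b i)) 3, mul_sum Hᶜ a 3]

variable (hmu : 2 < muQ V g)
include hmu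

lemma exists_val_add_three_le {m : ℕ} (hm₁ : 1 ≤ m) (hm : m ≤ V 0 - 1) {w : Fin (t + 1) → ℤ}
    (hw : ∀ i, 0 ≤ w i) (hwc : cost w + 1 ≤ m) :
    ∃ b, (∀ i, 0 ≤ b i) ∧ cost b ≤ m ∧ val ρ w + 3 ≤ val ρ b := by
  have hw' := h.val_le_Tq (h.pos_of_V_zero_ne (by omega)) (m := m - 1) (by omega) hw
    (by push_cast [hm₁]; linarith)
  have := Tq_pred_add_three_le hmu hm₁ hm
  obtain ⟨b, hb, hc, hv⟩ := h.exists_Tq_le_val m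
  exact ⟨b, hb, hc, by linarith⟩

lemma val_add_three_mul_le (hV0 : 1 < V 0) {b : Fin (t + 1) → ℤ} (hb : ∀ i, 0 ≤ b i)
    (hc : cost b ≤ V 0 - 1) : val ρ b + 3 * (V 0 - 1 - cost b) ≤ g - 1 := by
  have hg := h.pos_of_V_zero_ne (by omega)
  obtain ⟨m, hm⟩ : ∃ m : ℕ, cost b = m := ⟨_, (Int.toNat_of_nonneg (cost_nonneg b)).symm⟩
  have hv := h.val_le_Tq hg (m := m) (by omega) hb hm.le
  have := Tq_add_three_mul_le hmu (m := m) (j := V 0 - 1 - m) (by omega)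
  have := h.Tq_lt hg (m := m + (V 0 - 1 - m)) (by omega)
  rw [hm]
  omega

lemma false_of_val_le {m : ℕ} (hm : 1 ≤ m) {U : ℤ}
    (hU : ∀ b, (∀ i, 0 ≤ b i) → cost b ≤ m → val ρ b ≤ U) (hUg : U < g)
    {w : Fin (t + 1) → ℤ} (hw : ∀ i, 0 ≤ w i) (hwc : cost w + 1 ≤ m) (hwU : U ≤ val ρ w + 2) :
    False := by
  rcases le_or_gt (V 0) m with hV | hV
  · obtain ⟨b, hb, hc, hv⟩ := h.exists_nonneg_cost_le_V (Nat.zero_le g)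
    have := hU b hb (hc.trans (by exact_mod_cast hV))
    push_cast at hv
    linarith
  · obtain ⟨b, hb, hc, hv⟩ := h.exists_val_add_three_le hmu hm (by omega) hw hwc
    linarith [hU b hb hc]

lemma exists_three_le (hV0 : 1 < V 0) : ∃ i, 3 ≤ ρ i := by
  obtain ⟨b, hb, hc, hv⟩ := h.exists_val_add_three_le hmu le_rfl (by omega)
    (w := 0) (fun _ => le_rfl) (by simp [cost, tri])
  by_contra! hsmall
  have := val_le_mul_cost (ρ := ρ) (r := 2) (by norm_num) (fun i => by have := hsmall i; omega) hb
  rw [show val ρ 0 = 0 by simp [val]] at hv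
  push_cast at hc
  linarith

/-- The level is one above the cost of the witness of `exists_heads_witness`; through
`two_mul_val_le_of_heads`, `harith` bounds the values at that level by `U`. -/
lemma false_of_heads (H : Finset (Fin (t + 1))) (hH : ∀ i ∈ H, 4 ≤ ρ i)
    (hS : ∀ i ∉ H, ρ i ≤ 3) (a : Fin (t + 1) → ℤ) (ha : ∀ i ∈ H, 0 ≤ a i) (U : ℤ)
    (hwU : U ≤ ∑ i ∈ H, a i * ρ i + 3 * count ρ 3 + 2)
    (hUg : U < ∑ i ∈ H, tri (ρ i - 1) + 3 * count ρ 3 + count ρ 2)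
    (harith : ∀ b : Fin (t + 1) → ℤ, (∀ i, 0 ≤ b i) → ∀ cs A B : ℤ, 0 ≤ A → 0 ≤ B →
      A ≤ count ρ 3 → B ≤ count ρ 2 → A + B ≤ cs →
      ∑ i ∈ H, tri (b i) + cs ≤ ∑ i ∈ H, tri (a i) + count ρ 3 + 1 →
      ∑ i ∈ H, 2 * (b i * ρ i) + 3 * cs + 3 * A + B ≤ 2 * U + 1) : False := by
  obtain ⟨w, hw, hwc, hwv⟩ :=
    exists_heads_witness (ρ := ρ) H (fun i hi => by have := hH i hi; omega) a ha
  obtain ⟨m, hm⟩ : ∃ m : ℕ, (m : ℤ) = cost w + 1 :=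
    ⟨_, Int.toNat_of_nonneg (by linarith [cost_nonneg w])⟩
  refine h.false_of_val_le hmu (m := m) (by have := cost_nonneg w; omega) (U := U)
    (fun b hb hc => ?_) (by rw [h.g_eq_of_heads H hH hS]; exact hUg) hw hm.ge
    (by rw [hwv]; exact hwU)
  obtain ⟨cs, A, B, hA, hB, hA3, hB2, hAB, hcost, hval⟩ := h.two_mul_val_le_of_heads H hS hb
  have := harith b hb cs A B hA hB hA3 hB2 hAB (by rw [← hwc]; omega)
  omega

lemma count_two_le_two (hS : ∀ i, ρ i ≤ 3) : count ρ 2 ≤ 2 := by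
  by_contra! h2
  refine h.false_of_heads hmu ∅ (by simp) (fun i _ => hS i) 0 (by simp) (3 * count ρ 3 + 2)
    (by simp) (by simp; omega) fun b _ cs A B _ _ hA3 _ hAB hc => ?_
  simp only [sum_empty] at hc ⊢
  omega

lemma false_of_single_head {j : Fin (t + 1)} (hj : ρ j = 4 ∨ ρ j = 5 ∨ ρ j = 7 ∧ count ρ 2 = 0)
    (hS : ∀ i ≠ j, ρ i ≤ 3) : False := by
  have hkill := h.false_of_heads hmu {j} (by simp; omega)
    (fun i hi => hS i (by simpa using hi))
  simp only [sum_singleton] at hkill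
  rcases hj with hj | hj | ⟨hj, h2⟩ <;> rw [hj] at hkill
  · rcases Nat.eq_zero_or_pos (count ρ 2) with h2 | h2
    · exact hkill (fun _ => 1) (by simp) (3 * count ρ 3 + 5) (by simp; omega)
        (by norm_num [tri, h2]; omega) fun b _ cs A B _ _ _ _ _ hc => by
          have := tri_lower_bounds (b j); simp only [tri_one] at hc; omega
    · exact hkill (fun _ => 1) (by simp) (3 * count ρ 3 + 6) (by simp; omega)
        (by norm_num [tri]; omega) fun b _ cs A B _ _ _ _ _ hc => by
          have := tri_lower_bounds (b j); simp only [tri_one] at hc; omega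
  · exact hkill (fun _ => 1) (by simp) (3 * count ρ 3 + 7) (by simp; omega)
      (by norm_num [tri]; omega) fun b _ cs A B _ _ _ _ _ hc => by
        have := tri_lower_bounds (b j); simp only [tri_one] at hc; omega
  · exact hkill (fun _ => 2) (by simp) (3 * count ρ 3 + 15) (by simp; omega)
      (by norm_num [tri, h2]; omega) fun b _ cs A B _ _ _ _ _ hc => by
        have := tri_lower_bounds (b j); simp only [tri_two] at hc; omega

lemma false_of_two_heads {j k : Fin (t + 1)} (hjk : j ≠ k)
    (hjk' : ρ j = 4 ∧ ρ k = 4 ∨ ρ j = 5 ∧ ρ k = 5) (hS : ∀ i, i ≠ j → i ≠ k → ρ i ≤ 3)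
    (h2 : count ρ 2 = 0) : False := by
  have hkill := h.false_of_heads hmu {j, k} (by simp; omega)
    (fun i hi => by simp only [mem_insert, mem_singleton, not_or] at hi; exact hS i hi.1 hi.2)
  simp only [sum_pair hjk, h2] at hkill
  rcases hjk' with ⟨hj, hk⟩ | ⟨hj, hk⟩ <;> rw [hj, hk] at hkill
  · exact hkill (fun _ => 1) (by simp) (3 * count ρ 3 + 9) (by simp; omega)
      (by norm_num [tri]; omega) fun b _ cs A B _ _ _ _ _ hc => by
        have := tri_lower_bounds (b j); have := tri_lower_bounds (b k)
        simp only [tri_one] at hc; omega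
  · exact hkill (fun _ => 1) (by simp) (3 * count ρ 3 + 12) (by simp; omega)
      (by norm_num [tri]; omega) fun b _ cs A B _ _ _ _ _ hc => by
        have := tri_lower_bounds (b j); have := tri_lower_bounds (b k)
        simp only [tri_one] at hc; omega

lemma sum_slack_le_two (hV0 : 1 < V 0) {b : Fin (t + 1) → ℤ} (hb : ∀ i, 0 ≤ b i)
    (hc : cost b ≤ V 0) (hv : (g : ℤ) ≤ val ρ b) :
    ∑ i ∈ univ.filter (fun i => ρ i / 3 < b i),
      (3 * (tri (b i) - tri (ρ i / 3)) - ρ i * (b i - ρ i / 3)) ≤ 2 := by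
  rcases (univ.filter fun i => ρ i / 3 < b i).eq_empty_or_nonempty with hX | ⟨i, hi⟩
  · simp [hX]
  have hs := fun i (hi : i ∈ univ.filter fun i => ρ i / 3 < b i) => by
    have := h.one_le i
    exact slack_bounds (r := ρ i) (β := ρ i / 3) (by omega) (by omega) (by omega)
      (Int.add_one_le_iff.2 (mem_filter.1 hi).2) (u := b i)
  have hC := (hs i hi).2.2.trans (single_le_sum (f := fun j => tri (b j) - tri (ρ j / 3))
    (fun j hj => by linarith [(hs j hj).2.2]) hi)
  have hcost := cost_eq_cost_min_add b (fun i => ρ i / 3)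
  have := h.val_add_three_mul_le hmu hV0 (b := fun i => min (b i) (ρ i / 3))
    (fun i => le_min (hb i) (by have := h.one_le i; omega)) (by omega)
  rw [sum_sub_distrib, ← mul_sum]
  linarith [val_eq_val_min_add ρ b (fun i => ρ i / 3)]

/-- Take `b ≥ 0` of cost `≤ V_0` and value `≥ g̃`, and let `X` be where `b` exceeds
`⌊ρ/3⌋`. By `sum_slack_le_two`, `b = ⌊ρ/3⌋ + 1` on `X`, so `val ρ b ≤ ∑ ρ_i ⌊ρ_i/3⌋ + ∑_X ρ_i`. -/
lemma exists_sum_defect_le (hV0 : 1 < V 0) :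
    ∃ X : Finset (Fin (t + 1)), ∑ i ∈ X, (3 * (ρ i / 3) + 3 - ρ i) ≤ 2 ∧
      ∑ i, defect (ρ i) ≤ ∑ i ∈ X, ρ i := by
  obtain ⟨b, hb, hc, hv⟩ := h.exists_nonneg_cost_le_V (Nat.zero_le g)
  rw [Nat.cast_zero, sub_zero] at hv
  have hS := h.sum_slack_le_two hmu hV0 hb hc hv
  set X := univ.filter fun i => ρ i / 3 < b i
  have hs := fun i (hi : i ∈ X) => by
    have := h.one_le i
    exact slack_bounds (r := ρ i) (β := ρ i / 3) (by omega) (by omega) (by omega)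
      (Int.add_one_le_iff.2 (mem_filter.1 hi).2) (u := b i)
  have hX₁ : ∀ i ∈ X, b i = ρ i / 3 + 1 := fun i hi => by
    by_contra hne
    have h₅ := (hs i hi).2.1 (by have := (mem_filter.1 hi).2; omega)
    have := (single_le_sum (f := fun i => 3 * (tri (b i) - tri (ρ i / 3)) - ρ i * (b i - ρ i / 3))
      (fun j hj => by have := (hs j hj).1; omega) hi).trans hS
    linarith
  refine ⟨X, le_trans (le_of_eq (sum_congr rfl fun i hi => ?_)) hS, ?_⟩
  · have := tri_sub_one (ρ i / 3 + 1)
    rw [add_sub_cancel_right] at this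
    rw [hX₁ i hi]
    linarith
  · have hval' : val ρ (fun i => min (b i) (ρ i / 3)) ≤ ∑ i, ρ i * (ρ i / 3) :=
      sum_le_sum fun i _ => by
        rw [mul_comm]; exact mul_le_mul_of_nonneg_left (min_le_right _ _) (h.nonneg i)
    have hg : (g : ℤ) = ∑ i, ρ i * (ρ i / 3) + ∑ i, defect (ρ i) := by
      rw [h.g_eq, triSum, ← sum_add_distrib]
      exact sum_congr rfl fun i _ => by rw [defect]; ring
    have : ∑ i ∈ X, ρ i * (b i - ρ i / 3) = ∑ i ∈ X, ρ i :=
      sum_congr rfl fun i hi => by rw [hX₁ i hi]; ring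
    linarith [val_eq_val_min_add ρ b (fun i => ρ i / 3)]

lemma le_three (hV0 : 1 < V 0) (i : Fin (t + 1)) : ρ i ≤ 3 := by
  by_contra! h₄
  obtain ⟨X, hσ, hD⟩ := h.exists_sum_defect_le hmu hV0
  rcases headConfig_of_sum_defect_le h.one_le hσ hD (i₀ := i) (by omega) with
    ⟨j, hj, hS⟩ | ⟨j, k, hjk, hjk', hS, h₂⟩
  · exact h.false_of_single_head hmu hj hS
  · exact h.false_of_two_heads hmu hjk hjk' hS h₂

end Setup

end Realization

theorem stmt5_general (t : ℕ) (V : ℕ → ℕ) (g : ℕ)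
    (hV1 : ∀ i, V (i + 1) ≤ V i)
    (hV2 : ∀ i, V i = 0 ↔ g ≤ i)
    (ρ : Fin (t + 1) → ℤ)
    (hmono : ∀ i j : Fin (t + 1), i ≤ j → ρ j ≤ ρ i)
    (hpos : ∀ i, 1 ≤ ρ i)
    (hreal : Realizes V ρ)
    (hV0 : 1 < V 0)
    (hmu : 2 < muQ V g) :
    (ρ 0 = 3 ∨ ρ 0 = 4) ∧
    (ρ 0 = 3 → ∃ d ε : ℕ, 1 ≤ d ∧ ε ≤ 2 ∧
      (Finset.univ.filter (fun i : Fin (t + 1) => ρ i = 3)).card = d ∧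
      (Finset.univ.filter (fun i : Fin (t + 1) => ρ i = 2)).card = ε ∧
      (∀ i, ρ i = 3 ∨ ρ i = 2 ∨ ρ i = 1) ∧
      g = 3 * d + ε) ∧
    (ρ 0 = 4 → ∃ d : ℕ,
      (Finset.univ.filter (fun i : Fin (t + 1) => ρ i = 4)).card = 1 ∧
      (Finset.univ.filter (fun i : Fin (t + 1) => ρ i = 3)).card = d ∧
      (∀ i, ρ i = 4 ∨ ρ i = 3 ∨ ρ i = 1) ∧
      g = 3 * d + 6) := by
  have h : Realization.Setup V g ρ := ⟨antitone_nat_of_succ_le hV1, hV2, hpos, hreal⟩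
  have hle := h.le_three hmu hV0
  obtain ⟨i, hi⟩ := h.exists_three_le hmu hV0
  have h₀ : ρ 0 = 3 := le_antisymm (hle 0) (hi.trans (hmono 0 i (Fin.zero_le i)))
  have hd : 1 ≤ Realization.count ρ 3 := Finset.card_pos.2 ⟨0, by simp [h₀]⟩
  have hg := h.g_eq_of_heads ∅ (by simp) fun i _ => hle i
  rw [Finset.sum_empty, zero_add] at hg
  refine ⟨Or.inl h₀, fun _ => ⟨_, _, hd, h.count_two_le_two hmu hle, rfl, rfl, fun i => ?_,
    by exact_mod_cast hg⟩, fun h₄ => by omega⟩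
  have := hpos i
  have := hle i
  omega

/-- Suppose `ρ` realizes `(V_i)`, `V_0 > 1` and `μ > 2`. Then `ρ_0 ∈ {3,4}`, and `ρ`
takes one of the stated forms: if `ρ_0 = 3` then `ρ = (3,…,3,2,…,2,1,…,1)` with `d ≥ 1`
threes and `ε ≤ 2` twos and `g̃ = 3d + ε`; if `ρ_0 = 4` then `ρ = (4,3,…,3,1,…,1)` with
`d` threes and `g̃ = 3d + 6`. -/
theorem stmt5 (t : ℕ) (V : ℕ → ℕ) (g : ℕ)
    (hV1 : ∀ i, V (i + 1) ≤ V i)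
    (hV2 : ∀ i, V i = 0 ↔ g ≤ i)
    (hV3 : ∀ i, V i ≤ V (i + 1) + 1)
    (ρ : Fin (t + 1) → ℤ)
    (hmono : ∀ i j : Fin (t + 1), i ≤ j → ρ j ≤ ρ i)
    (hpos : ∀ i, 1 ≤ ρ i)
    (hg : 2 * (g : ℤ) ≤ dotP ρ ρ)
    (hreal : Realizes V ρ)
    (hV0 : 1 < V 0)
    (hmu : 2 < muQ V g) :
    (ρ 0 = 3 ∨ ρ 0 = 4) ∧
    (ρ 0 = 3 → ∃ d ε : ℕ, 1 ≤ d ∧ ε ≤ 2 ∧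
      (Finset.univ.filter (fun i : Fin (t + 1) => ρ i = 3)).card = d ∧
      (Finset.univ.filter (fun i : Fin (t + 1) => ρ i = 2)).card = ε ∧
      (∀ i, ρ i = 3 ∨ ρ i = 2 ∨ ρ i = 1) ∧
      g = 3 * d + ε) ∧
    (ρ 0 = 4 → ∃ d : ℕ,
      (Finset.univ.filter (fun i : Fin (t + 1) => ρ i = 4)).card = 1 ∧
      (Finset.univ.filter (fun i : Fin (t + 1) => ρ i = 3)).card = d ∧
      (∀ i, ρ i = 4 ∨ ρ i = 3 ∨ ρ i = 1) ∧
      g = 3 * d + 6) :=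
  stmt5_general t V g hV1 hV2 ρ hmono hpos hreal hV0 hmu
end

section
/- Let (M, B) be a lattice of rank r ≥ 1 with an obtuse superbase v_0, v_1, …, v_r. Then: (1) the simple graph on the index set {0, 1, …, r} in which i and j are adjacent if and only if i ≠ j and v_i·v_j < 0 is connected; (2) the ℤ-linear map φ : ℤ^{r+1} → M defined by φ(x) = Σ_{i=0}^r x_i v_i is surjective, its kernel is exactly {(c, c, …, c) : c ∈ ℤ}, and for all x, y ∈ ℤ^{r+1} one has B(φ(x), φ(y)) = Σ_{0 ≤ i < j ≤ r} (−v_i·v_j)(x_i − x_j)(y_i − y_j). -/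
/-!
Since `∑ vᵢ = 0`, the vectors `v₁, …, v_r` still span `M`, and a spanning family of `finrank`
many vectors over a commutative ring is a basis; this pins the kernel of `x ↦ ∑ xᵢ vᵢ` down to
the constants. The Gram matrix `vᵢ·vⱼ` is symmetric with vanishing row sums, which turns the
bilinear expansion of `φ(x)·φ(y)` into Selling's formula. Finally, if the graph were
disconnected, the vectors indexed by a component would be orthogonal to all others, so their sum
`w` satisfies `w·w = w·(-∑ rest) = 0`, hence `w = 0`, and the indicator of the component would be
a non-constant element of the kernel.
-/

open Finset

theorem Finset.sum_sum_filter_lt_add_swap {ι A : Type*} [Fintype ι] [LinearOrder ι]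
    [AddCommMonoid A] (f : ι → ι → A) (hf : ∀ i, f i i = 0) :
    ∑ i, ∑ j with i < j, (f i j + f j i) = ∑ i, ∑ j, f i j := by
  calc ∑ i, ∑ j with i < j, (f i j + f j i)
      = ∑ i, ∑ j, (if i < j then f i j else 0) + ∑ i, ∑ j, (if i < j then f j i else 0) := by
        simp only [sum_filter, sum_add_distrib]
    _ = ∑ i, ∑ j, ((if i < j then f i j else 0) + (if j < i then f i j else 0)) := by
        rw [sum_comm (f := fun i j => if i < j then f j i else 0), ← sum_add_distrib]
        simp only [sum_add_distrib]
    _ = ∑ i, ∑ j, f i j := by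
        refine sum_congr rfl fun i _ => sum_congr rfl fun j _ => ?_
        rcases lt_trichotomy i j with h | rfl | h
        · simp [h, h.not_gt]
        · simp [hf]
        · simp [h, h.not_gt]

section Superbase

variable {R M : Type*} [CommRing R] [AddCommGroup M] [Module R M]

theorem apply_sum_smul_sum_smul {ι : Type*} [Fintype ι] (B : M →ₗ[R] M →ₗ[R] R) (v : ι → M)
    (x y : ι → R) :
    B (∑ i, x i • v i) (∑ j, y j • v j) = ∑ i, ∑ j, B (v i) (v j) * x i * y j := by
  simp only [map_sum, map_smul, LinearMap.sum_apply, LinearMap.smul_apply, smul_eq_mul,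
    mul_sum]
  rw [sum_comm]
  exact sum_congr rfl fun i _ => sum_congr rfl fun j _ => by ring

/-- Selling's formula. -/
theorem apply_sum_smul_sum_smul_eq_sum_lt {ι : Type*} [Fintype ι] [LinearOrder ι]
    (B : M →ₗ[R] M →ₗ[R] R) (hsymm : ∀ x y, B x y = B y x) (v : ι → M)
    (hsum : ∑ i, v i = 0) (x y : ι → R) :
    B (∑ i, x i • v i) (∑ j, y j • v j) =
      ∑ i, ∑ j with i < j, (-B (v i) (v j)) * (x i - x j) * (y i - y j) := by
  have hrow : ∀ i, ∑ j, B (v i) (v j) = 0 := fun i => by rw [← map_sum, hsum, map_zero]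
  -- each symmetric summand splits as `h i j + h j i`, with `h` vanishing on the diagonal
  let h i j := B (v i) (v j) * x i * (y j - y i)
  calc B (∑ i, x i • v i) (∑ j, y j • v j)
      = ∑ i, ∑ j, h i j := by
        simp only [h, apply_sum_smul_sum_smul, mul_sub, sum_sub_distrib, ← sum_mul, hrow,
          zero_mul, sub_zero]
    _ = ∑ i, ∑ j with i < j, (h i j + h j i) :=
        (sum_sum_filter_lt_add_swap h fun i => by simp [h]).symm
    _ = _ := by
        refine sum_congr rfl fun i _ => sum_congr rfl fun j _ => ?_
        simp only [h, hsymm (v j) (v i)]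
        ring

theorem eq_neg_sum_succ_of_sum_eq_zero {r : ℕ} {v : Fin (r + 1) → M} (hsum : ∑ i, v i = 0) :
    v 0 = -∑ i : Fin r, v i.succ :=
  eq_neg_of_add_eq_zero_left (by rwa [Fin.sum_univ_succ] at hsum)

theorem sum_smul_eq_sum_sub_smul_succ {r : ℕ} {v : Fin (r + 1) → M} (hsum : ∑ i, v i = 0)
    (x : Fin (r + 1) → R) :
    ∑ i, x i • v i = ∑ i : Fin r, (x i.succ - x 0) • v i.succ := by
  simp only [Fin.sum_univ_succ, eq_neg_sum_succ_of_sum_eq_zero hsum, sub_smul, sum_sub_distrib,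
    smul_neg, ← smul_sum]
  abel

theorem linearIndependent_comp_succ_of_sum_eq_zero {r : ℕ} {v : Fin (r + 1) → M}
    (hrank : Module.finrank R M = r) (hspan : Submodule.span R (Set.range v) = ⊤)
    (hsum : ∑ i, v i = 0) :
    LinearIndependent R (v ∘ Fin.succ) := by
  refine linearIndependent_of_top_le_span_of_card_eq_finrank ?_ (by simp [hrank])
  rw [← hspan, Submodule.span_le]
  rintro _ ⟨i, rfl⟩
  refine Fin.cases ?_ (fun j => Submodule.subset_span ⟨j, rfl⟩) i
  rw [eq_neg_sum_succ_of_sum_eq_zero hsum]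
  exact neg_mem (Submodule.sum_mem _ fun j _ => Submodule.subset_span ⟨j, rfl⟩)

theorem sum_smul_eq_zero_iff_exists_const {r : ℕ} {v : Fin (r + 1) → M}
    (hrank : Module.finrank R M = r) (hspan : Submodule.span R (Set.range v) = ⊤)
    (hsum : ∑ i, v i = 0) (x : Fin (r + 1) → R) :
    ∑ i, x i • v i = 0 ↔ ∃ c, ∀ i, x i = c := by
  constructor
  · intro hx
    rw [sum_smul_eq_sum_sub_smul_succ hsum] at hx
    have hli := Fintype.linearIndependent_iff.1
      (linearIndependent_comp_succ_of_sum_eq_zero hrank hspan hsum) _ hx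
    exact ⟨x 0, Fin.cases rfl fun i => sub_eq_zero.1 (hli i)⟩
  · rintro ⟨c, hc⟩
    simp only [hc, ← smul_sum, hsum, smul_zero]

theorem apply_sum_self_eq_zero_of_orthogonal_compl {ι : Type*} [Fintype ι] [DecidableEq ι]
    (B : M →ₗ[R] M →ₗ[R] R) (v : ι → M) (hsum : ∑ i, v i = 0) (S : Finset ι)
    (hS : ∀ k ∈ S, ∀ l ∉ S, B (v k) (v l) = 0) :
    B (∑ k ∈ S, v k) (∑ k ∈ S, v k) = 0 := by
  have hcompl : ∑ k ∈ S, v k = -∑ l ∈ Sᶜ, v l :=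
    eq_neg_of_add_eq_zero_left (by rw [sum_add_sum_compl, hsum])
  nth_rewrite 2 [hcompl]
  simp only [map_neg, map_sum, LinearMap.sum_apply, neg_eq_zero]
  exact sum_eq_zero fun l hl => sum_eq_zero fun k hk => hS k hk l (mem_compl.1 hl)

theorem connected_fromRel_of_sum_smul_eq_zero_imp_const {ι : Type*} [Fintype ι] [Nonempty ι]
    [PartialOrder R] [Nontrivial R] (B : M →ₗ[R] M →ₗ[R] R) (v : ι → M)
    (hpos : ∀ x : M, x ≠ 0 → 0 < B x x) (hsum : ∑ i, v i = 0)
    (hobtuse : ∀ i j, i ≠ j → B (v i) (v j) ≤ 0)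
    (hker : ∀ x : ι → R, ∑ i, x i • v i = 0 → ∃ c, ∀ i, x i = c) :
    (SimpleGraph.fromRel fun i j => B (v i) (v j) < 0).Connected := by
  classical
  set G := SimpleGraph.fromRel fun i j => B (v i) (v j) < 0
  refine ⟨fun a b => ?_⟩
  by_contra hab
  let S : Finset ι := {k | G.Reachable a k}
  have hS : ∀ k ∈ S, ∀ l ∉ S, B (v k) (v l) = 0 := by
    intro k hk l hl
    have hne : k ≠ l := by rintro rfl; exact hl hk
    refine (hobtuse k l hne).lt_or_eq.resolve_left fun hlt => hl ?_
    simp only [S, mem_filter, mem_univ, true_and] at hk ⊢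
    exact hk.trans ((SimpleGraph.fromRel_adj _ k l).2 ⟨hne, Or.inl hlt⟩).reachable
  have hw : ∑ k ∈ S, v k = 0 := by
    by_contra hw
    exact (hpos _ hw).ne' (apply_sum_self_eq_zero_of_orthogonal_compl B v hsum S hS)
  obtain ⟨c, hc⟩ := hker (fun k => if k ∈ S then 1 else 0) (by simpa [ite_smul] using hw)
  have ha := hc a
  have hb := hc b
  simp only [S, mem_filter, mem_univ, true_and, SimpleGraph.Reachable.refl, hab] at ha hb
  exact one_ne_zero (ha.trans hb.symm)

end Superbase

theorem stmt9_general (M : Type*) [AddCommGroup M] [Module ℤ M]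
    (B : M →ₗ[ℤ] M →ₗ[ℤ] ℤ)
    (hsymm : ∀ x y : M, B x y = B y x)
    (hpos : ∀ x : M, x ≠ 0 → 0 < B x x)
    (r : ℕ) (hrank : Module.finrank ℤ M = r)
    (v : Fin (r + 1) → M)
    (hspan : Submodule.span ℤ (Set.range v) = ⊤)
    (hsum : ∑ i, v i = 0)
    (hobtuse : ∀ i j, i ≠ j → B (v i) (v j) ≤ 0) :
    (SimpleGraph.fromRel (fun i j : Fin (r + 1) => B (v i) (v j) < 0)).Connected ∧
    Function.Surjective (fun x : Fin (r + 1) → ℤ => ∑ i, x i • v i) ∧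
    (∀ x : Fin (r + 1) → ℤ, (∑ i, x i • v i) = 0 ↔ ∃ c : ℤ, ∀ i, x i = c) ∧
    (∀ x y : Fin (r + 1) → ℤ,
      B (∑ i, x i • v i) (∑ i, y i • v i) =
        ∑ i : Fin (r + 1), ∑ j ∈ Finset.univ.filter (fun j : Fin (r + 1) => i < j),
          (-(B (v i) (v j))) * (x i - x j) * (y i - y j)) := by
  -- the statement's `•` is `zsmul`; the lemmas above use the given `Module ℤ M`
  simp only [← int_smul_eq_zsmul ‹Module ℤ M›]
  have hker := sum_smul_eq_zero_iff_exists_const hrank hspan hsum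
  exact ⟨connected_fromRel_of_sum_smul_eq_zero_imp_const B v hpos hsum hobtuse fun x => (hker x).1,
    fun m => (Submodule.mem_span_range_iff_exists_fun ℤ).1 (hspan ▸ Submodule.mem_top),
    hker, apply_sum_smul_sum_smul_eq_sum_lt B hsymm v hsum⟩

/-- Let `(M, B)` be a lattice (finitely generated free ℤ-module with a symmetric
positive-definite bilinear form) of rank `r ≥ 1` with an obtuse superbase
`v_0, …, v_r`. Then: (1) the simple graph on `{0,…,r}` in which `i ~ j` iff `i ≠ j`
and `v_i·v_j < 0` is connected; (2) the ℤ-linear map `φ(x) = Σ x_i v_i` is surjective,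
its kernel consists exactly of the constant vectors, and
`B(φ(x), φ(y)) = Σ_{i<j} (−v_i·v_j)(x_i − x_j)(y_i − y_j)`. -/
theorem stmt9 (M : Type*) [AddCommGroup M] [Module ℤ M]
    [Module.Free ℤ M] [Module.Finite ℤ M]
    (B : M →ₗ[ℤ] M →ₗ[ℤ] ℤ)
    (hsymm : ∀ x y : M, B x y = B y x)
    (hpos : ∀ x : M, x ≠ 0 → 0 < B x x)
    (r : ℕ) (hr : 1 ≤ r) (hrank : Module.finrank ℤ M = r)
    (v : Fin (r + 1) → M)
    (hspan : Submodule.span ℤ (Set.range v) = ⊤)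
    (hsum : ∑ i, v i = 0)
    (hobtuse : ∀ i j, i ≠ j → B (v i) (v j) ≤ 0) :
    (SimpleGraph.fromRel (fun i j : Fin (r + 1) => B (v i) (v j) < 0)).Connected ∧
    Function.Surjective (fun x : Fin (r + 1) → ℤ => ∑ i, x i • v i) ∧
    (∀ x : Fin (r + 1) → ℤ, (∑ i, x i • v i) = 0 ↔ ∃ c : ℤ, ∀ i, x i = c) ∧
    (∀ x y : Fin (r + 1) → ℤ,
      B (∑ i, x i • v i) (∑ i, y i • v i) =
        ∑ i : Fin (r + 1), ∑ j ∈ Finset.univ.filter (fun j : Fin (r + 1) => i < j),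
          (-(B (v i) (v j))) * (x i - x j) * (y i - y j)) :=
  stmt9_general M B hsymm hpos r hrank v hspan hsum hobtuse
end

section
/- Let G be a connected multigraph as above, and let x be a nonzero element of the graph lattice Λ(G). Then x is irreducible if and only if there exists a subset R ⊆ V such that x = [R] in Λ(G) and both R and V∖R induce connected subgraphs of G. -/
/-- The underlying simple graph of the multigraph with `e u v` edges joining `u` and
`v`: vertices `u ≠ v` are adjacent iff there is at least one edge between them. -/
def mgraph {V : Type*} (e : V → V → ℕ) : SimpleGraph V :=
  SimpleGraph.fromRel (fun u v => 0 < e u v)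

/-- The bilinear pairing on `ℤ^V` given by
`B(x,y) = Σ_{unordered pairs {u,w}} e(u,w)(x_u − x_w)(y_u − y_w)`
(written as half of the sum over ordered pairs; the division is exact since `e` is
symmetric). -/
def Bform {V : Type*} [Fintype V] (e : V → V → ℕ) (x y : V → ℤ) : ℤ :=
  (∑ u, ∑ w, (e u w : ℤ) * (x u - x w) * (y u - y w)) / 2

/-- The graph lattice `Λ(G) = ℤ^V / ℤ·[V]`, the quotient of `ℤ^V` by the span of the
all-ones vector. -/
abbrev GLat (V : Type*) [Fintype V] :=
  (V → ℤ) ⧸ (Submodule.span ℤ {(fun _ => (1 : ℤ) : V → ℤ)})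

/-- The class of `x : ℤ^V` in the graph lattice `Λ(G)`. -/
abbrev glmk {V : Type*} [Fintype V] (x : V → ℤ) : GLat V := Submodule.Quotient.mk x

/-- The pairing induced by `Bform` on the graph lattice, computed on (arbitrary)
representatives; it is well defined since `Bform` vanishes against constant vectors. -/
noncomputable def qform {V : Type*} [Fintype V] (e : V → V → ℕ) (a b : GLat V) : ℤ :=
  Bform e (Quotient.out a) (Quotient.out b)

/-- The indicator vector `[R] ∈ ℤ^V` of a finite subset `R ⊆ V`. -/
def indFn {V : Type*} [DecidableEq V] (R : Finset V) : V → ℤ :=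
  fun u => if u ∈ R then 1 else 0

/-! Suppose `[R] = y + z` with `y = [g]`. On an edge `uw` the summand of `y·z` is
`d (s - d)` with `d = g u - g w` and `s = [R]u - [R]w ∈ {-1, 0, 1}`, which is `≤ 0`; so
`y·z ≥ 0` forces every edge summand to vanish. If `R` and `V∖R` are connected, `g` is then
constant on each of them, and a crossing edge forces the jump between the two constants to be
`0` or `1`, i.e. `y = 0` or `z = 0`.

Conversely, an irreducible `x = [f]` is the indicator of the top level set `S` of `f`, because
`[S]·(x - [S]) ≥ 0`. A disconnection `S = A ⊔ B` would give `x = [A] + [B]` with `[A]·[B] = 0`;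
the complement is handled by `[V∖S] = -[S]` and the symmetry `(-y)·(-z) = y·z`. -/

theorem mul_sub_nonpos_of_abs_le_one {d s : ℤ} (hs : |s| ≤ 1) : d * (s - d) ≤ 0 := by
  rcases abs_le.1 hs with ⟨h₁, h₂⟩
  nlinarith [Int.le_self_sq d, Int.le_self_sq (-d)]

namespace SimpleGraph

variable {V : Type*} {G : SimpleGraph V}

theorem induce_connected_of_forall_exists_adj [DecidableEq V] {S : Finset V}
    (hS : S.Nonempty)
    (h : ∀ A ⊆ S, A.Nonempty → (S \ A).Nonempty → ∃ a ∈ A, ∃ b ∈ S \ A, G.Adj a b) :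
    (G.induce (S : Set V)).Connected := by
  classical
  obtain ⟨u, hu⟩ := hS
  let A := S.filter fun w => ∃ hw : w ∈ S, (G.induce (S : Set V)).Reachable ⟨u, hu⟩ ⟨w, hw⟩
  have hA : ∀ w, w ∈ A ↔ ∃ hw : w ∈ S, (G.induce (S : Set V)).Reachable ⟨u, hu⟩ ⟨w, hw⟩ :=
    fun w => by simp [A]
  have hSA : S \ A = ∅ := by
    by_contra hne
    obtain ⟨a, ha, b, hb, hab⟩ := h A (Finset.filter_subset _ _) ⟨u, (hA u).2 ⟨hu, .rfl⟩⟩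
      (Finset.nonempty_iff_ne_empty.2 hne)
    obtain ⟨haS, hua⟩ := (hA a).1 ha
    obtain ⟨hbS, hbA⟩ := Finset.mem_sdiff.1 hb
    exact hbA ((hA b).2 ⟨hbS, hua.trans (Adj.reachable (G := G.induce (S : Set V)) hab)⟩)
  refine (connected_iff_exists_forall_reachable _).2 ⟨⟨u, hu⟩, fun ⟨w, hw⟩ => ?_⟩
  have hwA : w ∈ A := by
    by_contra hwA
    simpa [hSA] using Finset.mem_sdiff.2 ⟨Finset.mem_coe.1 hw, hwA⟩
  exact ((hA w).1 hwA).2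

theorem Connected.eq_of_forall_adj_induce {S : Set V} (hS : (G.induce S).Connected)
    {β : Type*} {g : V → β} (h : ∀ a ∈ S, ∀ b ∈ S, G.Adj a b → g a = g b)
    {a b : V} (ha : a ∈ S) (hb : b ∈ S) : g a = g b := by
  by_contra hab
  obtain ⟨p⟩ := hS.preconnected ⟨a, ha⟩ ⟨b, hb⟩
  obtain ⟨d, -, hd₁, hd₂⟩ := p.exists_boundary_dart {v | g v = g a} rfl (Ne.symm hab)
  exact hd₂ ((h _ d.fst.2 _ d.snd.2 d.adj).symm.trans hd₁)

end SimpleGraph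

section

variable {V : Type*}

theorem indFn_eq_add_indFn_sdiff [DecidableEq V] {A S : Finset V} (hAS : A ⊆ S) :
    indFn S = indFn A + indFn (S \ A) := by
  funext u
  by_cases huA : u ∈ A
  · simp [indFn, huA, hAS huA]
  · by_cases huS : u ∈ S <;> simp [indFn, huA, huS]

theorem abs_indFn_sub_le_one [DecidableEq V] (R : Finset V) (u w : V) :
    |indFn R u - indFn R w| ≤ 1 := by
  by_cases hu : u ∈ R <;> by_cases hw : w ∈ R <;> simp [indFn, hu, hw]

theorem natCast_mul_eq_zero_or_adj (e : V → V → ℕ) (f g : V → ℤ) (u w : V) :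
    (e u w : ℤ) * (f u - f w) * (g u - g w) = 0 ∨ (mgraph e).Adj u w := by
  by_cases huw : u = w
  · simp [huw]
  rcases Nat.eq_zero_or_pos (e u w) with h | h
  · simp [h]
  · exact .inr ((SimpleGraph.fromRel_adj _ _ _).2 ⟨huw, .inl h⟩)

end

section GraphLattice

variable {V : Type*} [Fintype V]

theorem glmk_eq_glmk_iff {f g : V → ℤ} : glmk f = glmk g ↔ ∃ c : ℤ, ∀ u, f u = g u + c := by
  rw [Submodule.Quotient.eq, Submodule.mem_span_singleton]
  refine ⟨fun ⟨c, hc⟩ => ⟨c, fun u => ?_⟩, fun ⟨c, hc⟩ => ⟨c, funext fun u => ?_⟩⟩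
  · have := congrFun hc u
    simp only [Pi.smul_apply, smul_eq_mul, mul_one, Pi.sub_apply] at this
    omega
  · simp only [Pi.smul_apply, smul_eq_mul, mul_one, Pi.sub_apply, hc u]
    ring

theorem glmk_eq_zero_iff {f : V → ℤ} : glmk f = 0 ↔ ∃ c : ℤ, ∀ u, f u = c := by
  rw [← Submodule.Quotient.mk_zero, glmk_eq_glmk_iff]
  simp

section Indicator

variable [DecidableEq V]

theorem glmk_indFn_ne_zero {R : Finset V} {a b : V} (ha : a ∈ R) (hb : b ∉ R) :
    glmk (indFn R) ≠ 0 := by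
  rw [Ne, glmk_eq_zero_iff]
  rintro ⟨c, hc⟩
  have := (hc a).trans (hc b).symm
  simp [indFn, ha, hb] at this

theorem Finset.Nonempty.of_glmk_indFn_ne_zero {R : Finset V} (h : glmk (indFn R) ≠ 0) :
    R.Nonempty := by
  rw [Finset.nonempty_iff_ne_empty]
  rintro rfl
  exact h (glmk_eq_zero_iff.2 ⟨0, fun u => by simp [indFn]⟩)

theorem glmk_indFn_compl (R : Finset V) : glmk (indFn Rᶜ) = -glmk (indFn R) := by
  rw [eq_neg_iff_add_eq_zero, ← Submodule.Quotient.mk_add, glmk_eq_zero_iff]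
  exact ⟨1, fun u => by by_cases hu : u ∈ R <;> simp [indFn, hu]⟩

end Indicator

variable (e : V → V → ℕ)

theorem Bform_add_const (f g : V → ℤ) (c d : ℤ) :
    Bform e (fun u => f u + c) (fun u => g u + d) = Bform e f g := by
  simp only [Bform, add_sub_add_right_eq_sub]

theorem qform_glmk (f g : V → ℤ) : qform e (glmk f) (glmk g) = Bform e f g := by
  obtain ⟨c, hc⟩ := glmk_eq_glmk_iff.1 (Quotient.out_eq' (glmk f))
  obtain ⟨d, hd⟩ := glmk_eq_glmk_iff.1 (Quotient.out_eq' (glmk g))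
  rw [qform, ← Bform_add_const e f g c d, ← funext hc, ← funext hd]

theorem qform_neg_neg (y z : GLat V) : qform e (-y) (-z) = qform e y z := by
  obtain ⟨f, rfl⟩ := Submodule.Quotient.mk_surjective _ y
  obtain ⟨g, rfl⟩ := Submodule.Quotient.mk_surjective _ z
  rw [← Submodule.Quotient.mk_neg, ← Submodule.Quotient.mk_neg, qform_glmk, qform_glmk]
  simp only [Bform, Pi.neg_apply]
  congr 1
  exact Finset.sum_congr rfl fun u _ => Finset.sum_congr rfl fun w _ => by ring

theorem Bform_nonneg_of_forall_adj {f g : V → ℤ}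
    (h : ∀ u w, (mgraph e).Adj u w → 0 ≤ (f u - f w) * (g u - g w)) : 0 ≤ Bform e f g := by
  suffices 0 ≤ ∑ u, ∑ w, (e u w : ℤ) * (f u - f w) * (g u - g w) by
    rw [Bform]; omega
  refine Finset.sum_nonneg fun u _ => Finset.sum_nonneg fun w _ => ?_
  rcases natCast_mul_eq_zero_or_adj e f g u w with h0 | hadj
  · exact h0.ge
  · rw [mul_assoc]; exact mul_nonneg (Int.natCast_nonneg _) (h u w hadj)

theorem mul_eq_zero_of_adj_of_Bform_nonneg {f g : V → ℤ}
    (hle : ∀ u w, (mgraph e).Adj u w → (f u - f w) * (g u - g w) ≤ 0)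
    (h : 0 ≤ Bform e f g) {u w : V} (huw : (mgraph e).Adj u w) :
    (f u - f w) * (g u - g w) = 0 := by
  have hterm : ∀ u w, (e u w : ℤ) * (f u - f w) * (g u - g w) ≤ 0 := fun u w => by
    rcases natCast_mul_eq_zero_or_adj e f g u w with h0 | hadj
    · exact h0.le
    · rw [mul_assoc]; exact mul_nonpos_of_nonneg_of_nonpos (Int.natCast_nonneg _) (hle u w hadj)
  have hsum : ∑ u, ∑ w, (e u w : ℤ) * (f u - f w) * (g u - g w) = 0 := by
    refine le_antisymm (Finset.sum_nonpos fun u _ => Finset.sum_nonpos fun w _ => hterm u w) ?_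
    rw [Bform] at h; omega
  have hzero : ∀ u w, (e u w : ℤ) * (f u - f w) * (g u - g w) = 0 := fun u w =>
    (Finset.sum_eq_zero_iff_of_nonpos (fun w _ => hterm u w)).1
      ((Finset.sum_eq_zero_iff_of_nonpos
        (fun u _ => Finset.sum_nonpos fun w _ => hterm u w)).1 hsum u (Finset.mem_univ _))
      w (Finset.mem_univ _)
  rcases ((SimpleGraph.fromRel_adj _ _ _).1 huw).2 with hpos | hpos
  · simpa [mul_assoc, hpos.ne'] using hzero u w
  · have := hzero w u
    simp only [mul_assoc, mul_eq_zero, Nat.cast_eq_zero, hpos.ne', false_or] at this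
    rcases this with h0 | h0 <;> simp [sub_eq_zero.1 h0]

end GraphLattice

section Decomposable

variable {V : Type*} [Fintype V] (e : V → V → ℕ)

def IsDecomposable (x : GLat V) : Prop :=
  ∃ y z : GLat V, y ≠ 0 ∧ z ≠ 0 ∧ x = y + z ∧ 0 ≤ qform e y z

variable {e}

theorem IsDecomposable.neg {x : GLat V} (h : IsDecomposable e x) : IsDecomposable e (-x) := by
  obtain ⟨y, z, hy, hz, rfl, hyz⟩ := h
  exact ⟨-y, -z, neg_ne_zero.2 hy, neg_ne_zero.2 hz, neg_add _ _,
    (qform_neg_neg e y z).ge.trans' hyz⟩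

variable [DecidableEq V]

theorem Bform_indFn_sub_nonneg_of_le {f : V → ℤ} {M : ℤ} (hM : ∀ v, f v ≤ M) {S : Finset V}
    (hS : ∀ v, v ∈ S ↔ f v = M) : 0 ≤ Bform e (indFn S) (f - indFn S) := by
  refine Bform_nonneg_of_forall_adj e fun u w _ => ?_
  have hu := hM u
  have hw := hM w
  by_cases huS : u ∈ S <;> by_cases hwS : w ∈ S <;>
    simp only [indFn, huS, hwS, if_true, if_false, Pi.sub_apply] <;>
    rw [hS] at huS hwS <;> omega

theorem exists_eq_glmk_indFn_of_not_isDecomposable [Nonempty V] {x : GLat V}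
    (h : ¬ IsDecomposable e x) : ∃ S : Finset V, x = glmk (indFn S) := by
  obtain ⟨f, rfl⟩ : ∃ f, glmk f = x := Submodule.Quotient.mk_surjective _ x
  obtain ⟨b, -, hb⟩ := Finset.univ.exists_max_image f Finset.univ_nonempty
  let S := Finset.univ.filter fun v => f v = f b
  have hS : ∀ v, v ∈ S ↔ f v = f b := by simp [S]
  refine ⟨S, ?_⟩
  rcases eq_or_ne (glmk (indFn S)) 0 with hS0 | hS0
  · obtain ⟨c, hc⟩ := glmk_eq_zero_iff.1 hS0
    refine hS0 ▸ glmk_eq_zero_iff.2 ⟨f b, fun v => (hS v).1 ?_⟩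
    have := (hc v).trans (hc b).symm
    simp only [indFn, (hS b).2 rfl, if_true] at this
    by_contra hv
    simp [hv] at this
  by_contra hne
  have hsplit : glmk f = glmk (indFn S) + glmk (f - indFn S) := by
    rw [← Submodule.Quotient.mk_add, add_sub_cancel]
  refine h ⟨_, _, hS0, fun h0 => hne ?_, hsplit, ?_⟩
  · rw [hsplit, h0, add_zero]
  · rw [qform_glmk]
    exact Bform_indFn_sub_nonneg_of_le (fun v => hb v (Finset.mem_univ v)) hS

theorem induce_connected_of_not_isDecomposable {S : Finset V} (hS : S.Nonempty)
    (h : ¬ IsDecomposable e (glmk (indFn S))) : ((mgraph e).induce (S : Set V)).Connected := by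
  refine SimpleGraph.induce_connected_of_forall_exists_adj hS fun A hAS ⟨a, ha⟩ ⟨b, hb⟩ => ?_
  by_contra! hcut
  obtain ⟨hbS, hbA⟩ := Finset.mem_sdiff.1 hb
  refine h ⟨glmk (indFn A), glmk (indFn (S \ A)), glmk_indFn_ne_zero ha hbA,
    glmk_indFn_ne_zero hb fun ha' => (Finset.mem_sdiff.1 ha').2 ha, ?_, ?_⟩
  · rw [← Submodule.Quotient.mk_add, ← indFn_eq_add_indFn_sdiff hAS]
  · rw [qform_glmk]
    refine Bform_nonneg_of_forall_adj e fun u w huw => ?_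
    have hwu := huw.symm
    have huAS := @hAS u
    have hwAS := @hAS w
    by_cases huA : u ∈ A <;> by_cases hwA : w ∈ A <;> by_cases huS : u ∈ S <;>
      by_cases hwS : w ∈ S <;> simp_all [indFn]

theorem not_isDecomposable_glmk_indFn (hconn : (mgraph e).Connected) {R : Finset V}
    (hR : ((mgraph e).induce (R : Set V)).Connected)
    (hRc : ((mgraph e).induce ((Rᶜ : Finset V) : Set V)).Connected) :
    ¬ IsDecomposable e (glmk (indFn R)) := by
  rintro ⟨y, z, hy, hz, hsum, hyz⟩
  obtain ⟨g, rfl⟩ : ∃ g, glmk g = y := Submodule.Quotient.mk_surjective _ y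
  obtain rfl : z = glmk (indFn R - g) :=
    (eq_sub_of_add_eq' hsum.symm).trans (Submodule.Quotient.mk_sub _).symm
  rw [qform_glmk] at hyz
  have hedge : ∀ u w, (mgraph e).Adj u w →
      (g u - g w) * ((indFn R u - indFn R w) - (g u - g w)) = 0 := by
    refine fun u w huw => ?_
    have := mul_eq_zero_of_adj_of_Bform_nonneg e (fun u w _ => ?_) hyz huw
    · simpa only [Pi.sub_apply, sub_sub_sub_comm] using this
    · simpa only [Pi.sub_apply, sub_sub_sub_comm] using
        mul_sub_nonpos_of_abs_le_one (d := g u - g w) (abs_indFn_sub_le_one R u w)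
  have hside : ∀ a b, (a ∈ R ↔ b ∈ R) → (mgraph e).Adj a b → g a = g b := by
    intro a b hab hadj
    have h0 := hedge a b hadj
    rw [show indFn R a = indFn R b by simp [indFn, hab], sub_self, zero_sub, mul_neg,
      neg_eq_zero, mul_self_eq_zero, sub_eq_zero] at h0
    exact h0
  obtain ⟨⟨r, hr⟩⟩ := hR.nonempty
  obtain ⟨⟨s, hs⟩⟩ := hRc.nonempty
  obtain ⟨p⟩ := hconn.preconnected r s
  obtain ⟨⟨⟨u, w⟩, huw⟩, -, hu, hw⟩ := p.exists_boundary_dart R hr (by simpa using hs)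
  simp only [Finset.mem_coe] at hu hw
  have hgR : ∀ v ∈ R, g v = g u := fun v hv =>
    hR.eq_of_forall_adj_induce (fun a ha b hb => hside a b (iff_of_true ha hb)) hv hu
  have hgRc : ∀ v ∉ R, g v = g w := fun v hv =>
    hRc.eq_of_forall_adj_induce (fun a ha b hb => hside a b (iff_of_false (by simpa using ha)
      (by simpa using hb))) (by simpa using hv) (by simpa using hw)
  have hg : ∀ v, g v = (g u - g w) * indFn R v + g w := fun v => by
    by_cases hv : v ∈ R
    · simp [indFn, hv, hgR v hv]
    · simp [indFn, hv, hgRc v hv]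
  have hk := hedge u w huw
  simp only [indFn, hu, hw, if_true, if_false, sub_zero] at hk
  rcases mul_eq_zero.1 hk with hk | hk
  · exact hy (glmk_eq_zero_iff.2 ⟨g w, fun v => by rw [hg v, hk, zero_mul, zero_add]⟩)
  · exact hz (glmk_eq_zero_iff.2 ⟨-g w, fun v => by
      rw [Pi.sub_apply, hg v]; linear_combination (indFn R v) * hk⟩)

end Decomposable

theorem stmt11_general {V : Type*} [Fintype V] [DecidableEq V] (e : V → V → ℕ)
    (hconn : (mgraph e).Connected)
    (x : GLat V) (hx : x ≠ 0) :
    (¬ ∃ y z : GLat V, y ≠ 0 ∧ z ≠ 0 ∧ x = y + z ∧ 0 ≤ qform e y z) ↔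
    (∃ R : Finset V, x = glmk (indFn R) ∧
      (SimpleGraph.induce (↑R : Set V) (mgraph e)).Connected ∧
      (SimpleGraph.induce (↑(Rᶜ) : Set V) (mgraph e)).Connected) := by
  have := hconn.nonempty
  change ¬ IsDecomposable e x ↔ _
  constructor
  · intro hirr
    obtain ⟨S, rfl⟩ := exists_eq_glmk_indFn_of_not_isDecomposable hirr
    have hirrc : ¬ IsDecomposable e (glmk (indFn Sᶜ)) := fun h =>
      hirr (by simpa [glmk_indFn_compl] using h.neg)
    have hxc : glmk (indFn Sᶜ) ≠ 0 := by rwa [glmk_indFn_compl, neg_ne_zero]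
    exact ⟨S, rfl, induce_connected_of_not_isDecomposable (.of_glmk_indFn_ne_zero hx) hirr,
      induce_connected_of_not_isDecomposable (.of_glmk_indFn_ne_zero hxc) hirrc⟩
  · rintro ⟨R, rfl, hR, hRc⟩
    exact not_isDecomposable_glmk_indFn hconn hR hRc

/-- A nonzero element `x` of the graph lattice of a connected multigraph `G` is
irreducible (cannot be written `x = y + z` with `y, z ≠ 0` and `y·z ≥ 0`) if and only if
`x = [R]` for some `R ⊆ V` such that both `R` and `V∖R` induce connected subgraphs. -/
theorem stmt11 {V : Type*} [Fintype V] [DecidableEq V] (e : V → V → ℕ)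
    (hsym : ∀ u v, e u v = e v u) (hloop : ∀ v, e v v = 0)
    (hconn : (mgraph e).Connected)
    (x : GLat V) (hx : x ≠ 0) :
    (¬ ∃ y z : GLat V, y ≠ 0 ∧ z ≠ 0 ∧ x = y + z ∧ 0 ≤ qform e y z) ↔
    (∃ R : Finset V, x = glmk (indFn R) ∧
      (SimpleGraph.induce (↑R : Set V) (mgraph e)).Connected ∧
      (SimpleGraph.induce (↑(Rᶜ) : Set V) (mgraph e)).Connected) :=
  stmt11_general e hconn x hx
end
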